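/- arXiv:1908.07559 — 11 statements merged into one kernel-verified Lean document; each statement's English description precedes it below -/
import Mathlib

section
/- Let T > 0, μ ∈ ℝ, and z < y be real numbers, and let X : [0,T] → ℝ be continuous. Define ω(t) = X(t) − X(0) − μt. If X(0) ≤ y set L(t) = − min_{0≤v≤t} min( y − X(0) − 2ω(v), 0 ) and Θ̃(t) = ω(t) − L(t); if X(0) > y set Θ̃(t) = −ω(t). Define Y(t) = y + μt − Θ̃(t) and Z(t) = z + μt + Θ̃(t). Then: (a) if z < X(0) ≤ y, then Z(t) < X(t) ≤ Y(t) (and in particular Z(t) < Y(t)) for all t ∈ [0,T]; (b) if X(0) ≤ z or X(0) > y, then it is not the case that both Z(T) < X(T) ≤ Y(T) and Z(t) < Y(t) for all t ∈ [0,T]. -/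
/-!
Write `g t = y - X 0 - 2 ω t`, so that `L` is the running maximum of `max (-g) 0`. When
`X 0 ≤ y` one has `X - Z = X 0 - z + L` and `Y - X = g + L`, which gives (a) since `L ≥ 0` and
`L ≥ -g`. For (b) with `X 0 ≤ z`, the condition `Z T < X T` forces `g` to fall below
`c = X 0 - z ≤ 0` before `T`; at the first time `s` that `g` reaches `c` we have `L s = -c`, and
then `Y s - Z s = g s + c + 2 L s = 0`. For `y < X 0` the reflection is absent and
`X - Y = X 0 - y`.
-/

open Set

theorem ciInf_eq_of_forall_le {ι α : Type*} [ConditionallyCompleteLattice α] {f : ι → α} {i : ι}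
    (h : ∀ j, f i ≤ f j) : ⨅ j, f j = f i :=
  IsLeast.csInf_eq ⟨mem_range_self i, forall_mem_range.2 h⟩

theorem ContinuousOn.ciInf_Icc_le {f : ℝ → ℝ} {a b t : ℝ} (hf : ContinuousOn f (Icc a b))
    (ht : t ∈ Icc a b) : ⨅ v : Icc a b, f v ≤ f t := by
  have hbdd := isCompact_Icc.bddBelow_image hf
  rw [image_eq_range] at hbdd
  exact ciInf_le hbdd ⟨t, ht⟩

theorem ContinuousOn.exists_first_eq {g : ℝ → ℝ} {a b c : ℝ} (hab : a ≤ b)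
    (hg : ContinuousOn g (Icc a b)) (ha : c < g a) (hb : g b ≤ c) :
    ∃ s ∈ Icc a b, g s = c ∧ ∀ t ∈ Ico a s, c < g t := by
  set S := Icc a b ∩ g ⁻¹' Iic c
  have hS : IsCompact S :=
    isCompact_Icc.of_isClosed_subset
      (hg.preimage_isClosed_of_isClosed isClosed_Icc isClosed_Iic) inter_subset_left
  obtain ⟨s, ⟨hs, hgs⟩, hleast⟩ := hS.exists_isLeast ⟨b, ⟨hab, le_rfl⟩, hb⟩
  have hbefore : ∀ t ∈ Ico a s, c < g t := fun t ht =>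
    lt_of_not_ge fun hgt => ht.2.not_ge (hleast ⟨⟨ht.1, ht.2.le.trans hs.2⟩, hgt⟩)
  obtain ⟨r, hr, hgr⟩ := intermediate_value_Icc' hs.1 (hg.mono (Icc_subset_Icc_right hs.2))
    ⟨hgs, ha.le⟩
  have hrs : r = s := le_antisymm hr.2 (hleast ⟨⟨hr.1, hr.2.trans hs.2⟩, hgr.le⟩)
  exact ⟨s, hs, hrs ▸ hgr, hbefore⟩

theorem exists_iInf_min_eq_of_iInf_min_lt {g : ℝ → ℝ} {T c : ℝ} (hT : 0 ≤ T)
    (hg : ContinuousOn g (Icc 0 T)) (hc : c ≤ 0) (h0 : c < g 0)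
    (hlt : ⨅ v : Icc (0 : ℝ) T, min (g v) 0 < c) :
    ∃ s ∈ Icc 0 T, g s = c ∧ ⨅ v : Icc (0 : ℝ) s, min (g v) 0 = c := by
  have : Nonempty (Icc (0 : ℝ) T) := ⟨⟨0, left_mem_Icc.2 hT⟩⟩
  obtain ⟨⟨v, hv⟩, hgv⟩ := exists_lt_of_ciInf_lt hlt
  obtain ⟨s, hs, hgs, hbefore⟩ := (hg.mono (Icc_subset_Icc_right hv.2)).exists_first_eq hv.1
    h0 (min_lt_iff.1 hgv |>.resolve_right hc.not_gt).le
  refine ⟨s, ⟨hs.1, hs.2.trans hv.2⟩, hgs, ?_⟩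
  rw [ciInf_eq_of_forall_le (i := ⟨s, hs.1, le_rfl⟩), hgs, min_eq_left hc]
  rintro ⟨t, ht⟩
  refine min_le_min_right _ ?_
  rcases ht.2.lt_or_eq with hts | rfl
  · exact hgs ▸ (hbefore t ⟨ht.1, hts⟩).le
  · exact le_rfl

/-- Theorem 1.3(a)/(b): the dynamical system built from the Skorohod-type flow
`Θ̃_{y,T}` preserves the duality function `Γ((z,y),x) = 1_{z < x ≤ y}`. -/
theorem stmt2 (T μ z y : ℝ) (hT : 0 < T) (hzy : z < y)
    (X : ℝ → ℝ) (hX : ContinuousOn X (Set.Icc 0 T))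
    (ω L Θ Y Z : ℝ → ℝ)
    (hω : ∀ t, ω t = X t - X 0 - μ * t)
    (hL : ∀ t, L t = -(⨅ v : Set.Icc (0 : ℝ) t, min (y - X 0 - 2 * ω v.1) 0))
    (hΘ : ∀ t, Θ t = if X 0 ≤ y then ω t - L t else -ω t)
    (hY : ∀ t, Y t = y + μ * t - Θ t)
    (hZ : ∀ t, Z t = z + μ * t + Θ t) :
    ((z < X 0 ∧ X 0 ≤ y) →
      ∀ t ∈ Set.Icc (0 : ℝ) T, Z t < X t ∧ X t ≤ Y t ∧ Z t < Y t) ∧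
    ((X 0 ≤ z ∨ y < X 0) →
      ¬((Z T < X T ∧ X T ≤ Y T) ∧ ∀ t ∈ Set.Icc (0 : ℝ) T, Z t < Y t)) := by
  have hXω : ∀ t, X t = X 0 + μ * t + ω t := fun t => by rw [hω]; ring
  have hg : ContinuousOn (fun t => y - X 0 - 2 * ω t) (Icc 0 T) := by
    simp only [hω]
    fun_prop
  have hLg : ∀ t ∈ Icc 0 T, -L t ≤ min (y - X 0 - 2 * ω t) 0 := fun t ht => by
    rw [hL, neg_neg]
    exact ((hg.inf continuousOn_const).mono (Icc_subset_Icc_right ht.2)).ciInf_Icc_le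
      (right_mem_Icc.2 ht.1)
  refine ⟨fun ⟨hz0, h0y⟩ t ht => ?_, fun hcase ⟨⟨hZT, hXT⟩, hZY⟩ => ?_⟩
  · obtain ⟨hgL, hL0⟩ := le_min_iff.1 (hLg t ht)
    simp only [hZ, hY, hΘ, if_pos h0y, hXω t]
    refine ⟨?_, ?_, ?_⟩ <;> linarith
  rcases hcase with h0z | hy0
  · have h0y : X 0 ≤ y := h0z.trans hzy.le
    simp only [hZ, hΘ, if_pos h0y, hXω T] at hZT
    obtain ⟨s, hs, hgs, hLs⟩ := exists_iInf_min_eq_of_iInf_min_lt (c := X 0 - z) hT.le hg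
      (by linarith) (by simp only [hω]; linarith) (by rw [hL] at hZT; linarith)
    have hZYs := hZY s hs
    simp only [hZ, hY, hΘ, if_pos h0y, hL, hLs] at hZYs
    linarith
  · simp only [hY, hΘ, if_neg hy0.not_ge, hXω T] at hXT
    linarith
end

section
/- Let D* be a standard Borel space, E a measurable subset of D* × ℝⁿ, and λ : D* × ℝⁿ → [0,∞) measurable with ∫_{ℝⁿ} λ(x*,x) dx = 1 for every x* ∈ D* and λ(x*,x) > 0 exactly when (x*,x) ∈ E. Suppose for each t ≥ 0 we are given a Markov kernel V_t from E to E and a Markov kernel Q*_t from D* to D* such that for every x* ∈ D*, t ≥ 0, and every bounded measurable g on E: ∫_{ℝⁿ} λ(x*,x) (V_t g)(x*,x) dx = ∫_{D*} Q*_t(x*, dy*) ∫_{ℝⁿ} λ(y*,y) g(y*,y) dy. Then for every x*₀ ∈ D*, every 0 < t₁ < ⋯ < t_N, and every bounded measurable f on (D*)^N: ∫_{ℝⁿ} λ(x*₀, x₀) [∫_E ⋯ ∫_E f(x*₁,…,x*_N) V_{t₁}((x*₀,x₀), d(x*₁,x₁)) ⋯ V_{t_N − t_{N−1}}((x*_{N−1},x_{N−1}),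 d(x*_N,x_N))] dx₀ = ∫_{D*} ⋯ ∫_{D*} f(x*₁,…,x*_N) Q*_{t₁}(x*₀, dx*₁) ⋯ Q*_{t_N − t_{N−1}}(x*_{N−1}, dx*_N). -/
open MeasureTheory ProbabilityTheory

attribute [local instance] Classical.propDecidable

/-- Iterated integration of a function of `N` coordinates against `N` successive Markov
kernels started from a point: `kernelIter N κ f a = ∫ κ₀(a,db₁) ∫ κ₁(b₁,db₂) ⋯ f(b₁,…,b_N)`. -/
noncomputable def kernelIter {α : Type*} [MeasurableSpace α] :
    (N : ℕ) → (Fin N → Kernel α α) → ((Fin N → α) → ℝ) → α → ℝ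
  | 0, _, f, _ => f (fun i => i.elim0)
  | (N + 1), κ, f, a =>
      ∫ b, kernelIter N (fun i => κ i.succ) (fun v => f (Fin.cons b v)) b ∂(κ 0 a)

/-- Joint measurability of `kernelIter` in a (finite-product) parameter and the
starting point. -/
lemma kernelIter_measurable {α : Type*} [MeasurableSpace α] :
    ∀ (N M : ℕ) (κ : Fin N → Kernel α α), (∀ i, IsSFiniteKernel (κ i)) →
      ∀ F : (Fin M → α) → (Fin N → α) → ℝ,
      Measurable (fun q : (Fin M → α) × (Fin N → α) => F q.1 q.2) →
      Measurable fun p : (Fin M → α) × α => kernelIter N κ (F p.1) p.2 := by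
  intro N
  induction N with
  | zero =>
      intro M κ _ F hF
      simp only [kernelIter]
      exact hF.comp (measurable_fst.prodMk measurable_const)
  | succ N IH =>
      intro M κ hκ F hF
      simp only [kernelIter]
      have hsnoc : Measurable fun r : ((Fin M → α) × α) × α => (Fin.snoc r.1.1 r.2 : Fin (M+1) → α) := by
        refine measurable_pi_lambda _ fun i => ?_
        refine Fin.lastCases ?_ (fun j => ?_) i
        · simpa using measurable_snd
        · simp only [Fin.snoc_castSucc]; exact ((measurable_pi_apply j).comp (measurable_fst.comp measurable_fst))
      have hF' : Measurable fun r : (Fin (M + 1) → α) × (Fin N → α) =>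
          F (Fin.init r.1) (Fin.cons (r.1 (Fin.last M)) r.2) := by
        refine hF.comp (Measurable.prodMk ?_ ?_)
        · exact measurable_pi_lambda _ fun j =>
            (measurable_pi_apply _).comp measurable_fst
        · refine measurable_pi_lambda _ fun i => ?_
          refine Fin.cases ?_ (fun j => ?_) i
          · simp only [Fin.cons_zero]; exact (measurable_pi_apply (Fin.last M)).comp measurable_fst
          · simp only [Fin.cons_succ]; exact (measurable_pi_apply j).comp measurable_snd
      have hG : Measurable fun q : (Fin (M + 1) → α) × α =>
          kernelIter N (fun i => κ i.succ)
            (fun v => F (Fin.init q.1) (Fin.cons (q.1 (Fin.last M)) v)) q.2 :=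
        IH (M + 1) (fun i => κ i.succ) (fun i => hκ i.succ)
          (fun w v => F (Fin.init w) (Fin.cons (w (Fin.last M)) v)) hF'
      -- the integrand as a function of (p, b)
      have hH : Measurable fun r : ((Fin M → α) × α) × α =>
          kernelIter N (fun i => κ i.succ) (fun v => F r.1.1 (Fin.cons r.2 v)) r.2 := by
        have h1 := hG.comp (hsnoc.prodMk measurable_snd)
        have heq : (fun r : ((Fin M → α) × α) × α =>
            kernelIter N (fun i => κ i.succ) (fun v => F r.1.1 (Fin.cons r.2 v)) r.2)
            = (fun q : (Fin (M + 1) → α) × α => kernelIter N (fun i => κ i.succ)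
                (fun v => F (Fin.init q.1) (Fin.cons (q.1 (Fin.last M)) v)) q.2)
              ∘ (fun r : ((Fin M → α) × α) × α => ((Fin.snoc r.1.1 r.2 : Fin (M+1) → α), r.2)) := by
          funext r
          simp [Fin.init_snoc, Fin.snoc_last]
        rw [heq]
        exact h1
      haveI := hκ 0
      have h := (hH.stronglyMeasurable).integral_kernel_prod_right'
        (κ := (κ 0).comap (Prod.snd : (Fin M → α) × α → α) measurable_snd)
      simp only [Kernel.comap_apply] at h
      exact h.measurable

/-- Uniform bound for `kernelIter` under Markov kernels. -/
lemma kernelIter_bound {α : Type*} [MeasurableSpace α] :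
    ∀ (N : ℕ) (κ : Fin N → Kernel α α), (∀ i, IsMarkovKernel (κ i)) →
      ∀ (F : (Fin N → α) → ℝ) (C : ℝ), 0 ≤ C → (∀ v, |F v| ≤ C) →
      ∀ a, |kernelIter N κ F a| ≤ C := by
  intro N
  induction N with
  | zero =>
      intro κ _ F C _ hFC a
      simpa [kernelIter] using hFC _
  | succ N IH =>
      intro κ hκ F C hC hFC a
      simp only [kernelIter]
      haveI := hκ 0
      have hb : ∀ b, ‖kernelIter N (fun i => κ i.succ) (fun v => F (Fin.cons b v)) b‖ ≤ C := by
        intro b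
        simpa [Real.norm_eq_abs] using
          IH (fun i => κ i.succ) (fun i => hκ i.succ) (fun v => F (Fin.cons b v)) C hC
            (fun v => hFC (Fin.cons b v)) b
      calc |∫ b, kernelIter N (fun i => κ i.succ) (fun v => F (Fin.cons b v)) b ∂((κ 0) a)|
          ≤ C * (((κ 0) a) Set.univ).toReal :=
            norm_integral_le_of_norm_le_const (Filter.Eventually.of_forall hb)
        _ = C := by simp

/-- Key induction: a single Λ-linked step propagates through `kernelIter`. -/
lemma kernelIter_linked {Dstar : Type*} [MeasurableSpace Dstar]
    {n : ℕ} {Eset : Set (Dstar × (Fin n → ℝ))}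
    (lam : Dstar → (Fin n → ℝ) → ℝ)
    (hlamnn : ∀ xs x, 0 ≤ lam xs x)
    (hlamint : ∀ xs, ∫ x, lam xs x = 1)
    (hlampos : ∀ xs x, 0 < lam xs x ↔ (xs, x) ∈ Eset) :
    ∀ (N : ℕ) (κ : Fin N → Kernel Eset Eset) (ρ : Fin N → Kernel Dstar Dstar),
      (∀ i, IsMarkovKernel (κ i)) → (∀ i, IsMarkovKernel (ρ i)) →
      (∀ (i : Fin N) (xs : Dstar) (g : Eset → ℝ), Measurable g → (∃ C, ∀ e, |g e| ≤ C) →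
        (∫ x, lam xs x *
            (if h : (xs, x) ∈ Eset then ∫ e, g e ∂((κ i) ⟨(xs, x), h⟩) else 0))
          = ∫ ys, (∫ y, lam ys y *
              (if h : (ys, y) ∈ Eset then g ⟨(ys, y), h⟩ else 0)) ∂((ρ i) xs)) →
      ∀ (f : (Fin N → Dstar) → ℝ), Measurable f → ∀ C : ℝ, 0 ≤ C → (∀ v, |f v| ≤ C) →
      ∀ xs : Dstar,
      (∫ x, lam xs x *
          (if h : (xs, x) ∈ Eset then
            kernelIter N κ (fun v => f (fun i => (v i).1.1)) ⟨(xs, x), h⟩ else 0))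
        = kernelIter N ρ f xs := by
  intro N
  induction N with
  | zero =>
      intro κ ρ _ _ _ f _ C _ _ xs
      simp only [kernelIter]
      have hc : f (fun i : Fin 0 => ((fun j : Fin 0 => (j.elim0 : Eset)) i).1.1)
          = f (fun i : Fin 0 => i.elim0) := by
        exact congrArg f (funext fun i => i.elim0)
      set c : ℝ := f (fun i : Fin 0 => i.elim0) with hcdef
      have hpt : ∀ x, lam xs x *
          (if h : (xs, x) ∈ Eset then
            f (fun i : Fin 0 => ((fun j : Fin 0 => (j.elim0 : Eset)) i).1.1) else 0)
          = c * lam xs x := by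
        intro x
        by_cases h : (xs, x) ∈ Eset
        · simp [h, hc, mul_comm]
        · have h0 : lam xs x = 0 :=
            le_antisymm (not_lt.mp fun hlt => h ((hlampos xs x).mp hlt)) (hlamnn xs x)
          simp [h, h0]
      calc (∫ x, lam xs x *
          (if h : (xs, x) ∈ Eset then
            f (fun i : Fin 0 => ((fun j : Fin 0 => (j.elim0 : Eset)) i).1.1) else 0))
          = ∫ x, c * lam xs x := by
            exact integral_congr_ae (Filter.Eventually.of_forall hpt)
        _ = c * ∫ x, lam xs x := integral_const_mul c _
        _ = c := by rw [hlamint, mul_one]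
  | succ N IH =>
      intro κ ρ hκ hρ hlink f hf C hC hfC xs
      -- notation
      set κ' : Fin N → Kernel Eset Eset := fun i => κ i.succ with hκ'
      set ρ' : Fin N → Kernel Dstar Dstar := fun i => ρ i.succ with hρ'
      set g : Eset → ℝ := fun e =>
        kernelIter N κ' (fun v => f (fun i => ((Fin.cons e v : Fin (N+1) → Eset) i).1.1)) e with hg
      have hmem : ∀ e : Eset, (e.1.1, e.1.2) ∈ Eset := fun e => by
        simpa using e.2
      -- measurability of g
      have hgmeas : Measurable g := by
        have hF : Measurable fun q : (Fin 1 → Eset) × (Fin N → Eset) =>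
            f (fun i => ((Fin.cons (q.1 0) q.2 : Fin (N+1) → Eset) i).1.1) := by
          refine hf.comp ?_
          refine measurable_pi_lambda _ fun i => ?_
          refine Fin.cases ?_ (fun j => ?_) i
          · simp only [Fin.cons_zero]; exact (measurable_fst.comp
              (measurable_subtype_coe.comp ((measurable_pi_apply 0).comp measurable_fst)))
          · simp only [Fin.cons_succ]; exact (measurable_fst.comp (measurable_subtype_coe.comp
              ((measurable_pi_apply j).comp measurable_snd)))
        have hM := kernelIter_measurable N 1 κ' (fun i => by haveI := hκ i.succ; infer_instance)
          (fun (w : Fin 1 → Eset) (v : Fin N → Eset) =>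
            f (fun i => ((Fin.cons (w 0) v : Fin (N+1) → Eset) i).1.1)) hF
        have := hM.comp ((measurable_pi_lambda
            (fun (e : Eset) (_ : Fin 1) => e) fun _ => measurable_id).prodMk measurable_id)
        exact this
      -- boundedness of g
      have hgbdd : ∃ C', ∀ e, |g e| ≤ C' := by
        refine ⟨C, fun e => ?_⟩
        exact kernelIter_bound N κ' (fun i => hκ i.succ) _ C hC (fun v => hfC _) e
      -- rewrite LHS as a single link step
      have hstep := hlink 0 xs g hgmeas hgbdd
      have hLHS : (∫ x, lam xs x *
          (if h : (xs, x) ∈ Eset then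
            kernelIter (N + 1) κ (fun v => f (fun i => (v i).1.1)) ⟨(xs, x), h⟩ else 0))
          = ∫ x, lam xs x *
          (if h : (xs, x) ∈ Eset then ∫ e, g e ∂((κ 0) ⟨(xs, x), h⟩) else 0) := by
        refine integral_congr_ae (Filter.Eventually.of_forall fun x => ?_)
        by_cases h : (xs, x) ∈ Eset <;> simp [h, kernelIter, hg, hκ']
      rw [hLHS, hstep]
      -- now identify the inner integral with the N-step statement via the IH
      have hinner : ∀ ys : Dstar,
          (∫ y, lam ys y * (if h : (ys, y) ∈ Eset then g ⟨(ys, y), h⟩ else 0))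
            = kernelIter N ρ' (fun w => f (Fin.cons ys w)) ys := by
        intro ys
        have hf' : Measurable fun w : Fin N → Dstar => f (Fin.cons ys w) := by
          refine hf.comp ?_
          refine measurable_pi_lambda _ fun i => ?_
          refine Fin.cases ?_ (fun j => ?_) i
          · simpa using measurable_const
          · simpa using measurable_pi_apply j
        have hkey : ∀ (y : Fin n → ℝ) (h : (ys, y) ∈ Eset),
            g ⟨(ys, y), h⟩ = kernelIter N κ'
              (fun v => (fun w => f (Fin.cons ys w)) (fun i => (v i).1.1))
              ⟨(ys, y), h⟩ := by
          intro y h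
          refine congrArg (fun F => kernelIter N κ' F (⟨(ys, y), h⟩ : Eset)) ?_
          funext v
          refine congrArg f (funext fun i => ?_)
          refine Fin.cases ?_ (fun j => ?_) i <;> simp
        have := IH κ' ρ' (fun i => hκ i.succ) (fun i => hρ i.succ)
          (fun i xs' g' hg' hgb' => hlink i.succ xs' g' hg' hgb')
          (fun w => f (Fin.cons ys w)) hf' C hC (fun w => hfC _) ys
        rw [← this]
        refine integral_congr_ae (Filter.Eventually.of_forall fun y => ?_)
        by_cases h : (ys, y) ∈ Eset
        · simp only [h, dif_pos]
          rw [hkey y h]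
        · simp [h]
      calc (∫ ys, (∫ y, lam ys y *
            (if h : (ys, y) ∈ Eset then g ⟨(ys, y), h⟩ else 0)) ∂((ρ 0) xs))
          = ∫ ys, kernelIter N ρ' (fun w => f (Fin.cons ys w)) ys ∂((ρ 0) xs) :=
            integral_congr_ae (Filter.Eventually.of_forall hinner)
        _ = kernelIter (N + 1) ρ f xs := by simp [kernelIter, hρ']

/-- Theorem 3.3: if the Markov semigroup `V_t` on `E` is Λ-linked to `Q*_t` via the link
`λ`, then under the coupling started from `λ(x*₀,·)` the `D*`-marginal finite-dimensional
distributions are Markov and governed by `Q*_t`. -/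
theorem stmt5 {Dstar : Type*} [MeasurableSpace Dstar] [StandardBorelSpace Dstar]
    (n : ℕ) (Eset : Set (Dstar × (Fin n → ℝ))) (hEm : MeasurableSet Eset)
    (lam : Dstar → (Fin n → ℝ) → ℝ)
    (hlamm : Measurable fun q : Dstar × (Fin n → ℝ) => lam q.1 q.2)
    (hlamnn : ∀ xs x, 0 ≤ lam xs x)
    (hlamint : ∀ xs, ∫ x, lam xs x = 1)
    (hlampos : ∀ xs x, 0 < lam xs x ↔ (xs, x) ∈ Eset)
    (V : ℝ → Kernel Eset Eset) (Q : ℝ → Kernel Dstar Dstar)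
    (hV : ∀ t, 0 ≤ t → IsMarkovKernel (V t))
    (hQ : ∀ t, 0 ≤ t → IsMarkovKernel (Q t))
    (hlink : ∀ (xs : Dstar) (t : ℝ), 0 ≤ t → ∀ g : Eset → ℝ,
      Measurable g → (∃ C, ∀ e, |g e| ≤ C) →
      (∫ x, lam xs x *
          (if h : (xs, x) ∈ Eset then ∫ e, g e ∂((V t) ⟨(xs, x), h⟩) else 0))
        = ∫ ys, (∫ y, lam ys y *
            (if h : (ys, y) ∈ Eset then g ⟨(ys, y), h⟩ else 0)) ∂((Q t) xs))
    (xs0 : Dstar) (N : ℕ) (hN : 1 ≤ N)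
    (t : Fin (N + 1) → ℝ) (ht0 : t 0 = 0) (htm : StrictMono t)
    (f : (Fin N → Dstar) → ℝ) (hfm : Measurable f) (hfb : ∃ C, ∀ v, |f v| ≤ C) :
    (∫ x0, lam xs0 x0 *
        (if h : (xs0, x0) ∈ Eset then
          kernelIter N (fun i => V (t i.succ - t i.castSucc))
            (fun v => f (fun i => (v i).1.1)) ⟨(xs0, x0), h⟩
        else 0))
      = kernelIter N (fun i => Q (t i.succ - t i.castSucc)) f xs0 := by
  obtain ⟨C, hfC⟩ := hfb
  have hC : 0 ≤ C := le_trans (abs_nonneg _) (hfC fun _ => xs0)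
  have hpos : ∀ i : Fin N, 0 ≤ t i.succ - t i.castSucc := fun i =>
    sub_nonneg.mpr (htm (Fin.castSucc_lt_succ : i.castSucc < i.succ)).le
  exact kernelIter_linked lam hlamnn hlamint hlampos N
    (fun i => V (t i.succ - t i.castSucc)) (fun i => Q (t i.succ - t i.castSucc))
    (fun i => hV _ (hpos i)) (fun i => hQ _ (hpos i))
    (fun i xs g hg hgb => hlink xs _ (hpos i) g hg hgb)
    f hfm C hC hfC xs0
end

section
/- Let D* be a standard Borel space and fix t > 0. Let p : ℝⁿ × ℝⁿ → [0,∞) be measurable with ∫ p(x,y) dy = 1 for all x, and let ν : ℝⁿ → (0,∞) be measurable with ν(x) p(x,y) = ν(y) p(y,x) for all x,y. Let Γ : D* × ℝⁿ → [0,∞) be bounded measurable, and let Q be a sub-Markov kernel on D* satisfying the Liggett duality ∫_{ℝⁿ} p(x,y) Γ(x*, y) dy = ∫_{D*} Q(x*, dy*) Γ(y*, x) for all x* ∈ D* and x ∈ ℝⁿ. Assume h(x*) := ∫_{ℝⁿ} Γ(x*,x) ν(x) dx is finite and strictly positive for every x* ∈ D*. Define λ(x*,x) = Γ(x*,x) ν(x)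 / h(x*), (Λ f)(x*) = ∫ λ(x*,x) f(x) dx, (P f)(x) = ∫ p(x,y) f(y) dy, and (Q* g)(x*) = (1/h(x*)) ∫_{D*} Q(x*, dy*) h(y*) g(y*). Then for every bounded measurable f : ℝⁿ → ℝ and every x* ∈ D*: (Λ(P f))(x*) = (Q*(Λ f))(x*). -/
open MeasureTheory ProbabilityTheory

/-- Proposition 3.4 (intertwining dual via Doob h-transform of a Liggett dual): with
`λ(x*,x) = Γ(x*,x) ν(x) / h(x*)` and `Q*` the Doob `h`-transform of the Liggett dual `Q`,
the intertwining relation `Λ (P f) = Q* (Λ f)` holds. -/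
theorem stmt6 {Dstar : Type*} [MeasurableSpace Dstar] [StandardBorelSpace Dstar]
    (n : ℕ)
    (p : (Fin n → ℝ) → (Fin n → ℝ) → ℝ)
    (hpm : Measurable fun q : (Fin n → ℝ) × (Fin n → ℝ) => p q.1 q.2)
    (hpnn : ∀ x y, 0 ≤ p x y) (hpint : ∀ x, ∫ y, p x y = 1)
    (ν : (Fin n → ℝ) → ℝ) (hνm : Measurable ν) (hνpos : ∀ x, 0 < ν x)
    (hsym : ∀ x y, ν x * p x y = ν y * p y x)
    (Γ : Dstar × (Fin n → ℝ) → ℝ) (hΓm : Measurable Γ) (hΓnn : ∀ q, 0 ≤ Γ q)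
    (hΓb : ∃ C, ∀ q, Γ q ≤ C)
    (Q : Kernel Dstar Dstar) (hQsub : ∀ xs, Q xs Set.univ ≤ 1)
    (hligg : ∀ (xs : Dstar) (x : Fin n → ℝ),
      (∫ y, p x y * Γ (xs, y)) = ∫ ys, Γ (ys, x) ∂(Q xs))
    (h : Dstar → ℝ) (hdef : ∀ xs, h xs = ∫ x, Γ (xs, x) * ν x)
    (hfin : ∀ xs, Integrable fun x => Γ (xs, x) * ν x)
    (hpos : ∀ xs, 0 < h xs)
    (lam : Dstar → (Fin n → ℝ) → ℝ)
    (hlam : ∀ xs x, lam xs x = Γ (xs, x) * ν x / h xs)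
    (f : (Fin n → ℝ) → ℝ) (hfm : Measurable f) (hfb : ∃ C, ∀ x, |f x| ≤ C)
    (xs : Dstar) :
    (∫ x, lam xs x * ∫ y, p x y * f y)
      = (h xs)⁻¹ * ∫ ys, (h ys * ∫ x, lam ys x * f x) ∂(Q xs) := by
  obtain ⟨Cf, hCf⟩ := hfb
  haveI hQfin : IsFiniteMeasure (Q xs) :=
    ⟨lt_of_le_of_lt (hQsub xs) ENNReal.one_lt_top⟩
  obtain ⟨CΓ, hCΓ⟩ := hΓb
  -- measurability of sections
  have hΓs : ∀ y : Fin n → ℝ, Measurable fun ys : Dstar => Γ (ys, y) := fun y =>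
    hΓm.comp (measurable_id.prodMk measurable_const)
  have hΓx : ∀ ys : Dstar, Measurable fun y => Γ (ys, y) := fun ys =>
    hΓm.comp (measurable_const.prodMk measurable_id)
  have hps : ∀ x, Measurable (p x) := fun x =>
    hpm.comp (measurable_const.prodMk measurable_id)
  have hpintg : ∀ x, Integrable (p x) := fun x => integrable_of_integral_eq_one (hpint x)
  set g : (Fin n → ℝ) → ℝ := fun x => Γ (xs, x) * ν x with hgdef
  have hgm : Measurable g := (hΓx xs).mul hνm
  have hgnn : ∀ x, 0 ≤ g x := fun x => mul_nonneg (hΓnn _) (hνpos x).le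
  have hgint : Integrable g := hfin xs
  -- generic bound
  have bnd : ∀ a b c : ℝ, 0 ≤ a → 0 ≤ b → |c| ≤ Cf → ‖a * (b * c)‖ ≤ Cf * (a * b) := by
    intro a b c ha hb hc
    rw [Real.norm_eq_abs, abs_mul, abs_mul, abs_of_nonneg ha, abs_of_nonneg hb]
    calc a * (b * |c|) ≤ a * (b * Cf) :=
          mul_le_mul_of_nonneg_left (mul_le_mul_of_nonneg_left hc hb) ha
      _ = Cf * (a * b) := by ring
  -- H : the kernel `g(x) p(x,y)` is integrable on the product space
  have hHm : Measurable fun q : (Fin n → ℝ) × (Fin n → ℝ) => g q.1 * p q.1 q.2 :=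
    (hgm.comp measurable_fst).mul hpm
  have H : Integrable (fun q : (Fin n → ℝ) × (Fin n → ℝ) => g q.1 * p q.1 q.2)
      ((volume : Measure (Fin n → ℝ)).prod volume) := by
    rw [integrable_prod_iff hHm.aestronglyMeasurable]
    constructor
    · exact Filter.Eventually.of_forall fun x => (hpintg x).const_mul (g x)
    · have : (fun x => ∫ y, ‖g x * p x y‖) = g := by
        funext x
        have h1 : ∀ y, ‖g x * p x y‖ = g x * p x y := fun y =>
          by rw [Real.norm_eq_abs, abs_of_nonneg (mul_nonneg (hgnn x) (hpnn x y))]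
        simp only [h1, integral_const_mul, hpint x, mul_one]
      rw [this]; exact hgint
  -- first Fubini integrability
  have hF : Integrable (Function.uncurry fun x y => g x * (p x y * f y))
      ((volume : Measure (Fin n → ℝ)).prod volume) := by
    refine (H.const_mul Cf).mono'
      ((hgm.comp measurable_fst).mul (hpm.mul (hfm.comp measurable_snd))).aestronglyMeasurable ?_
    exact Filter.Eventually.of_forall fun q =>
      bnd (g q.1) (p q.1 q.2) (f q.2) (hgnn q.1) (hpnn q.1 q.2) (hCf q.2)
  -- K : `Γ(ys,y) ν(y)` is integrable on volume ⊗ Q xs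
  have hKm : Measurable fun q : (Fin n → ℝ) × Dstar => Γ (q.2, q.1) * ν q.1 :=
    (hΓm.comp measurable_swap).mul (hνm.comp measurable_fst)
  have hKnorm : ∀ y : Fin n → ℝ,
      (∫ ys, ‖Γ (ys, y) * ν y‖ ∂(Q xs)) = ∫ x, g x * p x y := by
    intro y
    have h1 : ∀ ys : Dstar, ‖Γ (ys, y) * ν y‖ = Γ (ys, y) * ν y := fun ys => by
      rw [Real.norm_eq_abs, abs_of_nonneg (mul_nonneg (hΓnn _) (hνpos y).le)]
    calc (∫ ys, ‖Γ (ys, y) * ν y‖ ∂(Q xs)) = ∫ ys, Γ (ys, y) * ν y ∂(Q xs) := by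
          simp only [h1]
      _ = (∫ ys, Γ (ys, y) ∂(Q xs)) * ν y := integral_mul_const _ _
      _ = (∫ x, p y x * Γ (xs, x)) * ν y := by rw [← hligg xs y]
      _ = ∫ x, p y x * Γ (xs, x) * ν y := (integral_mul_const _ _).symm
      _ = ∫ x, g x * p x y := by
          refine integral_congr_ae (Filter.Eventually.of_forall fun x => ?_)
          calc p y x * Γ (xs, x) * ν y = Γ (xs, x) * (ν y * p y x) := by ring
            _ = Γ (xs, x) * (ν x * p x y) := by rw [← hsym x y]
            _ = g x * p x y := by rw [hgdef]; ring
  have K : Integrable (fun q : (Fin n → ℝ) × Dstar => Γ (q.2, q.1) * ν q.1)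
      ((volume : Measure (Fin n → ℝ)).prod (Q xs)) := by
    rw [integrable_prod_iff hKm.aestronglyMeasurable]
    constructor
    · refine Filter.Eventually.of_forall fun y => ?_
      show Integrable (fun ys : Dstar => Γ (ys, y) * ν y) (Q xs)
      refine (integrable_const (CΓ * ν y)).mono'
        ((hΓs y).mul measurable_const).aestronglyMeasurable ?_
      refine Filter.Eventually.of_forall fun ys => ?_
      rw [Real.norm_eq_abs, abs_of_nonneg (mul_nonneg (hΓnn _) (hνpos y).le)]
      exact mul_le_mul_of_nonneg_right (hCΓ _) (hνpos y).le
    · show Integrable (fun y => ∫ ys, ‖Γ (ys, y) * ν y‖ ∂(Q xs)) volume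
      have : (fun y => ∫ ys, ‖Γ (ys, y) * ν y‖ ∂(Q xs))
          = fun y => ∫ x, g x * p x y := funext hKnorm
      rw [this]
      exact H.integral_prod_right
  -- second Fubini integrability
  have hG : Integrable (Function.uncurry fun (y : Fin n → ℝ) (ys : Dstar) =>
      Γ (ys, y) * (ν y * f y)) ((volume : Measure (Fin n → ℝ)).prod (Q xs)) := by
    refine (K.const_mul Cf).mono'
      ((hΓm.comp measurable_swap).mul
        ((hνm.comp measurable_fst).mul (hfm.comp measurable_fst))).aestronglyMeasurable ?_
    refine Filter.Eventually.of_forall fun q => ?_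
    have : ‖Γ (q.2, q.1) * (ν q.1 * f q.1)‖ ≤ Cf * (Γ (q.2, q.1) * ν q.1) :=
      bnd _ _ _ (hΓnn _) (hνpos q.1).le (hCf q.1)
    exact this
  -- the main computation
  have key : (∫ x, g x * ∫ y, p x y * f y)
      = ∫ ys, (∫ x, Γ (ys, x) * ν x * f x) ∂(Q xs) := by
    calc (∫ x, g x * ∫ y, p x y * f y)
        = ∫ x, ∫ y, g x * (p x y * f y) := by
          simp only [integral_const_mul]
      _ = ∫ y, ∫ x, g x * (p x y * f y) := integral_integral_swap hF
      _ = ∫ y, (∫ x, g x * p x y) * f y := by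
          refine integral_congr_ae (Filter.Eventually.of_forall fun y => ?_)
          calc (∫ x, g x * (p x y * f y)) = ∫ x, (g x * p x y) * f y := by
                refine integral_congr_ae (Filter.Eventually.of_forall fun x => ?_)
                ring
            _ = (∫ x, g x * p x y) * f y := integral_mul_const _ _
      _ = ∫ y, ∫ ys, Γ (ys, y) * (ν y * f y) ∂(Q xs) := by
          refine integral_congr_ae (Filter.Eventually.of_forall fun y => ?_)
          show (∫ x, g x * p x y) * f y = ∫ ys, Γ (ys, y) * (ν y * f y) ∂(Q xs)
          have e1 : (∫ x, g x * p x y) = ν y * ∫ ys, Γ (ys, y) ∂(Q xs) := by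
            rw [← hligg xs y, ← integral_const_mul]
            refine integral_congr_ae (Filter.Eventually.of_forall fun x => ?_)
            calc g x * p x y = Γ (xs, x) * (ν x * p x y) := by rw [hgdef]; ring
              _ = Γ (xs, x) * (ν y * p y x) := by rw [hsym x y]
              _ = ν y * (p y x * Γ (xs, x)) := by ring
          rw [e1, show (ν y * ∫ ys, Γ (ys, y) ∂(Q xs)) * f y
              = (∫ ys, Γ (ys, y) ∂(Q xs)) * (ν y * f y) from by ring]
          exact (integral_mul_const _ _).symm
      _ = ∫ ys, (∫ y, Γ (ys, y) * (ν y * f y)) ∂(Q xs) := integral_integral_swap hG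
      _ = ∫ ys, (∫ x, Γ (ys, x) * ν x * f x) ∂(Q xs) := by
          refine integral_congr_ae (Filter.Eventually.of_forall fun ys => ?_)
          refine integral_congr_ae (Filter.Eventually.of_forall fun x => ?_)
          ring
  -- put the pieces together
  have lhs_eq : (∫ x, lam xs x * ∫ y, p x y * f y)
      = (h xs)⁻¹ * ∫ x, g x * ∫ y, p x y * f y := by
    rw [← div_eq_inv_mul, ← integral_div]
    refine integral_congr_ae (Filter.Eventually.of_forall fun x => ?_)
    simp only [hlam, hgdef]
    ring
  have rhs_eq : ∀ ys : Dstar, h ys * ∫ x, lam ys x * f x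
      = ∫ x, Γ (ys, x) * ν x * f x := by
    intro ys
    have e : (∫ x, lam ys x * f x) = (∫ x, Γ (ys, x) * ν x * f x) / h ys := by
      rw [← integral_div]
      refine integral_congr_ae (Filter.Eventually.of_forall fun x => ?_)
      simp only [hlam]; ring
    rw [e, mul_div_cancel₀ _ (hpos ys).ne']
  rw [lhs_eq, key]
  congr 1
  exact integral_congr_ae (Filter.Eventually.of_forall fun ys => (rhs_eq ys).symm)
end

section
/- Let D* be a standard Borel space and fix t > 0. Let p : ℝⁿ × ℝⁿ → [0,∞) be measurable with ∫ p(x,y) dy = 1 for all x, and let ν : ℝⁿ → (0,∞) be measurable with ν(x) p(x,y) = ν(y) p(y,x) for all x,y. Let Γ : D* × ℝⁿ → [0,∞) be bounded measurable, and let Q be a sub-Markov kernel on D* satisfying the Liggett duality ∫_{ℝⁿ} p(x,y) Γ(x*, y) dy = ∫_{D*} Q(x*, dy*) Γ(y*, x) for all x* ∈ D* and x ∈ ℝⁿ. Assume h(x*) := ∫_{ℝⁿ} Γ(x*,x) ν(x) dx is finite for every x* ∈ D*. Then h is harmonic for Q: ∫_{D*} Q(x*, dy*) h(y*) = h(x*)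 for every x* ∈ D*. -/
open MeasureTheory ProbabilityTheory

/-- The harmonicity claim following Proposition 3.4: combining Liggett duality with the
ν-symmetry of the transition density, the function `h(x*) = ∫ Γ(x*,x) ν(x) dx` is
harmonic for the sub-Markov kernel `Q`: `∫ Q(x*,dy*) h(y*) = h(x*)`. -/
theorem stmt7 {Dstar : Type*} [MeasurableSpace Dstar] [StandardBorelSpace Dstar]
    (n : ℕ)
    (p : (Fin n → ℝ) → (Fin n → ℝ) → ℝ)
    (hpm : Measurable fun q : (Fin n → ℝ) × (Fin n → ℝ) => p q.1 q.2)
    (hpnn : ∀ x y, 0 ≤ p x y) (hpint : ∀ x, ∫ y, p x y = 1)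
    (ν : (Fin n → ℝ) → ℝ) (hνm : Measurable ν) (hνpos : ∀ x, 0 < ν x)
    (hsym : ∀ x y, ν x * p x y = ν y * p y x)
    (Γ : Dstar × (Fin n → ℝ) → ℝ) (hΓm : Measurable Γ) (hΓnn : ∀ q, 0 ≤ Γ q)
    (hΓb : ∃ C, ∀ q, Γ q ≤ C)
    (Q : Kernel Dstar Dstar) (hQsub : ∀ xs, Q xs Set.univ ≤ 1)
    (hligg : ∀ (xs : Dstar) (x : Fin n → ℝ),
      (∫ y, p x y * Γ (xs, y)) = ∫ ys, Γ (ys, x) ∂(Q xs))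
    (h : Dstar → ℝ) (hdef : ∀ xs, h xs = ∫ x, Γ (xs, x) * ν x)
    (hfin : ∀ xs, Integrable fun x => Γ (xs, x) * ν x)
    (xs : Dstar) :
    ∫ ys, h ys ∂(Q xs) = h xs := by
  obtain ⟨C, hC⟩ := hΓb
  haveI : IsFiniteMeasure (Q xs) := ⟨lt_of_le_of_lt (hQsub xs) ENNReal.one_lt_top⟩
  -- measurability of sections
  have hpx : ∀ x, Measurable fun y => p x y := fun x =>
    hpm.comp measurable_prodMk_left
  have hpy : ∀ y, Measurable fun x => p x y := fun y =>
    hpm.comp (measurable_id.prodMk measurable_const)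
  have hΓ1 : ∀ x, Measurable fun ys : Dstar => Γ (ys, x) := fun x =>
    hΓm.comp (measurable_id.prodMk measurable_const)
  have hΓ2 : ∀ ys, Measurable fun x => Γ (ys, x) := fun ys =>
    hΓm.comp measurable_prodMk_left
  -- integrability of p x ·
  have hpInt : ∀ x, Integrable (fun y => p x y) := by
    intro x
    by_contra hI
    have := hpint x
    rw [integral_undef hI] at this
    norm_num at this
  -- lintegral of p x · equals 1
  have hplint : ∀ x, ∫⁻ y, ENNReal.ofReal (p x y) = 1 := by
    intro x
    rw [← ofReal_integral_eq_lintegral_ofReal (hpInt x) (ae_of_all _ fun y => hpnn x y),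
      hpint x, ENNReal.ofReal_one]
  -- integrability of Γ(·, x) w.r.t. Q xs
  have hΓQInt : ∀ x, Integrable (fun ys => Γ (ys, x)) (Q xs) := by
    intro x
    refine Integrable.mono' (integrable_const C) (hΓ1 x).aestronglyMeasurable
      (ae_of_all _ fun ys => ?_)
    rw [Real.norm_of_nonneg (hΓnn _)]
    exact hC _
  -- integrability of y ↦ p x y * Γ (xs, y)
  have hpΓInt : ∀ z : Dstar, ∀ x, Integrable (fun y => p x y * Γ (z, y)) := by
    intro z x
    refine Integrable.mono' ((hpInt x).const_mul C)
      ((hpx x).mul (hΓ2 z)).aestronglyMeasurable (ae_of_all _ fun y => ?_)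
    rw [Real.norm_of_nonneg (mul_nonneg (hpnn x y) (hΓnn _))]
    calc p x y * Γ (z, y) ≤ p x y * C := by
          exact mul_le_mul_of_nonneg_left (hC _) (hpnn x y)
      _ = C * p x y := mul_comm _ _
  -- nonnegativity of h
  have hhnn : ∀ ys, 0 ≤ h ys := fun ys => by
    rw [hdef]
    exact integral_nonneg fun x => mul_nonneg (hΓnn _) (hνpos x).le
  -- measurability of h
  have hhm : Measurable h := by
    have : h = fun ys => ∫ x, Γ (ys, x) * ν x := funext hdef
    rw [this]
    exact (StronglyMeasurable.integral_prod_right'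
      (f := fun q : Dstar × (Fin n → ℝ) => Γ q * ν q.2)
      ((hΓm.mul (hνm.comp measurable_snd)).stronglyMeasurable)).measurable
  -- key representation of ofReal (h ys)
  have key1 : ∀ ys, ENNReal.ofReal (h ys) = ∫⁻ x, ENNReal.ofReal (Γ (ys, x) * ν x) := by
    intro ys
    rw [hdef]
    exact ofReal_integral_eq_lintegral_ofReal (hfin ys)
      (ae_of_all _ fun x => mul_nonneg (hΓnn _) (hνpos x).le)
  -- main lintegral computation
  have main : ∫⁻ ys, ENNReal.ofReal (h ys) ∂(Q xs) = ENNReal.ofReal (h xs) := by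
    calc ∫⁻ ys, ENNReal.ofReal (h ys) ∂(Q xs)
        = ∫⁻ ys, ∫⁻ x, ENNReal.ofReal (Γ (ys, x)) * ENNReal.ofReal (ν x) ∂(volume) ∂(Q xs) := by
          refine lintegral_congr fun ys => ?_
          rw [key1 ys]
          exact lintegral_congr fun x => ENNReal.ofReal_mul (hΓnn _)
      _ = ∫⁻ x, ∫⁻ ys, ENNReal.ofReal (Γ (ys, x)) * ENNReal.ofReal (ν x) ∂(Q xs) ∂(volume) := by
          refine lintegral_lintegral_swap ?_
          exact ((ENNReal.measurable_ofReal.comp hΓm).mul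
            (ENNReal.measurable_ofReal.comp (hνm.comp measurable_snd))).aemeasurable
      _ = ∫⁻ x, (∫⁻ ys, ENNReal.ofReal (Γ (ys, x)) ∂(Q xs)) * ENNReal.ofReal (ν x) ∂(volume) := by
          exact lintegral_congr fun x =>
            lintegral_mul_const _ ((hΓ1 x).ennreal_ofReal)
      _ = ∫⁻ x, ENNReal.ofReal (∫ y, p x y * Γ (xs, y)) * ENNReal.ofReal (ν x) ∂(volume) := by
          refine lintegral_congr fun x => ?_
          rw [← ofReal_integral_eq_lintegral_ofReal (hΓQInt x)
            (ae_of_all _ fun ys => hΓnn _), ← hligg xs x]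
      _ = ∫⁻ x, ∫⁻ y, ENNReal.ofReal (ν y * p y x) * ENNReal.ofReal (Γ (xs, y))
            ∂(volume) ∂(volume) := by
          refine lintegral_congr fun x => ?_
          rw [ofReal_integral_eq_lintegral_ofReal (hpΓInt xs x)
            (ae_of_all _ fun y => mul_nonneg (hpnn x y) (hΓnn _)),
            ← lintegral_mul_const _
            (Measurable.ennreal_ofReal (f := fun y => p x y * Γ (xs, y)) ((hpx x).mul (hΓ2 xs)))]
          refine congrArg _ (funext fun y => ?_)
          rw [← hsym x y, ENNReal.ofReal_mul (hpnn x y),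
            ENNReal.ofReal_mul (hνpos x).le]
          ring
      _ = ∫⁻ y, ∫⁻ x, ENNReal.ofReal (ν y * p y x) * ENNReal.ofReal (Γ (xs, y))
            ∂(volume) ∂(volume) := by
          refine lintegral_lintegral_swap ?_
          have hm : Measurable fun q : (Fin n → ℝ) × (Fin n → ℝ) =>
              ENNReal.ofReal (ν q.2 * p q.2 q.1) * ENNReal.ofReal (Γ (xs, q.2)) := by
            refine Measurable.mul
              (f := fun q : (Fin n → ℝ) × (Fin n → ℝ) => ENNReal.ofReal (ν q.2 * p q.2 q.1))
              (g := fun q : (Fin n → ℝ) × (Fin n → ℝ) => ENNReal.ofReal (Γ (xs, q.2))) ?_ ?_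
            · exact ENNReal.measurable_ofReal.comp
                ((hνm.comp measurable_snd).mul (hpm.comp measurable_swap))
            · exact ENNReal.measurable_ofReal.comp (hΓm.comp
                (measurable_const.prodMk measurable_snd))
          exact hm.aemeasurable
      _ = ∫⁻ y, ENNReal.ofReal (Γ (xs, y) * ν y) ∂(volume) := by
          refine lintegral_congr fun y => ?_
          have : ∀ x, ENNReal.ofReal (ν y * p y x) * ENNReal.ofReal (Γ (xs, y))
              = ENNReal.ofReal (p y x) * (ENNReal.ofReal (ν y) * ENNReal.ofReal (Γ (xs, y))) := by
            intro x
            rw [ENNReal.ofReal_mul (hνpos y).le]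
            ring
          simp_rw [this]
          rw [lintegral_mul_const _ ((hpx y).ennreal_ofReal), hplint y,
            one_mul, ← ENNReal.ofReal_mul (hνpos y).le, mul_comm (ν y)]
      _ = ENNReal.ofReal (h xs) := (key1 xs).symm
  have hlhs : ∫ ys, h ys ∂(Q xs) = (∫⁻ ys, ENNReal.ofReal (h ys) ∂(Q xs)).toReal := by
    rw [integral_eq_lintegral_of_nonneg_ae (ae_of_all _ hhnn) hhm.aestronglyMeasurable]
  rw [hlhs, main, ENNReal.toReal_ofReal (hhnn xs)]
end

section
/- Let T > 0, let β : ℝⁿ → ℝⁿ be Lipschitz with constant K_β, let 0 = s₀ < s₁ < ⋯ < s_N = T, let ω̂ : [0,T] → ℝⁿ be continuous, and let x_N ∈ ℝⁿ. Define the explicit Euler approximation X̂_N : [0,T] → ℝⁿ by X̂_N(0) = x_N and X̂_N(s) = X̂_N(s_{k−1}) − β(X̂_N(s_{k−1}))(s − s_{k−1}) + ω̂(s) − ω̂(s_{k−1}) for s ∈ (s_{k−1}, s_k], k = 1, …, N. Then ‖X̂_N‖_T ≤ e^{K_β T} ( ‖x_N‖ + ‖β(0)‖ T + 2 ‖ω̂‖_T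 ), and for every δ ∈ (0,T], Δ_δ X̂_N ≤ ( K_β ‖X̂_N‖_T + ‖β(0)‖ ) δ + Δ_δ ω̂. -/
/-!
Write `Y = X̂_N - ω̂`. On each grid interval `(s_{k-1}, s_k]` the path `Y` is affine with slope
`-β(X̂_N(s_{k-1}))`, and `‖β x‖ ≤ K_β ‖x‖ + ‖β 0‖`. Walking through the grid one interval at a
time, the invariant `‖Y v‖ ≤ C e^{K_β v} - ‖ω̂‖_T - ‖β 0‖ (T - v)`, with
`C = ‖x_N‖ + ‖β 0‖ T + 2 ‖ω̂‖_T`, propagates because `K_β h e^{K_β t} ≤ e^{K_β (t + h)} - e^{K_β t}`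
(a discrete Gronwall argument). Once `X̂_N` is bounded, all slopes of `Y` are at most
`K_β ‖X̂_N‖_T + ‖β 0‖`, so `Y` is Lipschitz with that constant, and the modulus of continuity of
`X̂_N = Y + ω̂` is at most that of `Y` plus that of `ω̂`.
-/

/-- The sup norm `‖f‖_T = sup_{0 ≤ u ≤ T} ‖f(u)‖` of a path. -/
noncomputable def supNorm {E : Type*} [NormedAddCommGroup E] (T : ℝ) (f : ℝ → E) : ℝ :=
  ⨆ u : Set.Icc (0 : ℝ) T, ‖f u.1‖

/-- The modulus of continuity
`Δ_δ f = sup { ‖f(s+u) − f(s)‖ : 0 ≤ s < s+u ≤ T, u ≤ δ }` of a path. -/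
noncomputable def modCont {E : Type*} [NormedAddCommGroup E] (T δ : ℝ) (f : ℝ → E) : ℝ :=
  sSup {r | ∃ s u : ℝ, 0 ≤ s ∧ 0 < u ∧ u ≤ δ ∧ s + u ≤ T ∧ r = ‖f (s + u) - f s‖}

open Set Bornology Real

section PathNorms

variable {E : Type*} [NormedAddCommGroup E] {T δ : ℝ} {f : ℝ → E}

theorem supNorm_nonneg : 0 ≤ supNorm T f :=
  Real.iSup_nonneg fun _ => norm_nonneg _

theorem norm_le_supNorm (hf : IsBounded (f '' Icc 0 T)) {v : ℝ} (hv : v ∈ Icc 0 T) :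
    ‖f v‖ ≤ supNorm T f := by
  obtain ⟨C, hC⟩ := isBounded_iff_forall_norm_le.1 hf
  refine le_ciSup (f := fun u : Icc (0 : ℝ) T => ‖f u‖) ⟨C, ?_⟩ ⟨v, hv⟩
  rintro _ ⟨u, rfl⟩
  exact hC _ (mem_image_of_mem f u.2)

theorem supNorm_le (hT : 0 ≤ T) {M : ℝ} (h : ∀ v ∈ Icc 0 T, ‖f v‖ ≤ M) : supNorm T f ≤ M :=
  haveI : Nonempty (Icc (0 : ℝ) T) := ⟨⟨0, le_rfl, hT⟩⟩
  ciSup_le fun u => h u u.2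

theorem modCont_nonneg : 0 ≤ modCont T δ f :=
  Real.sSup_nonneg <| by
    rintro _ ⟨σ, u, -, -, -, -, rfl⟩
    exact norm_nonneg _

theorem norm_sub_le_modCont (hf : IsBounded (f '' Icc 0 T)) {σ u : ℝ} (hσ : 0 ≤ σ) (hu : 0 < u)
    (huδ : u ≤ δ) (hσu : σ + u ≤ T) : ‖f (σ + u) - f σ‖ ≤ modCont T δ f := by
  obtain ⟨C, hC⟩ := isBounded_iff_forall_norm_le.1 hf
  refine le_csSup ⟨2 * C, ?_⟩ ⟨σ, u, hσ, hu, huδ, hσu, rfl⟩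
  rintro _ ⟨σ', u', hσ', hu', -, hσu', rfl⟩
  have h₁ := hC _ (mem_image_of_mem f (⟨by linarith, hσu'⟩ : σ' + u' ∈ Icc 0 T))
  have h₂ := hC _ (mem_image_of_mem f (⟨hσ', by linarith⟩ : σ' ∈ Icc 0 T))
  linarith [norm_sub_le (f (σ' + u')) (f σ')]

theorem modCont_le {M : ℝ} (hM : 0 ≤ M)
    (h : ∀ σ u, 0 ≤ σ → 0 < u → u ≤ δ → σ + u ≤ T → ‖f (σ + u) - f σ‖ ≤ M) :
    modCont T δ f ≤ M :=
  Real.sSup_le (by rintro _ ⟨σ, u, hσ, hu, huδ, hσu, rfl⟩; exact h σ u hσ hu huδ hσu) hM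

end PathNorms

theorem norm_le_mul_norm_add_norm_zero {E : Type*} [NormedAddCommGroup E] {β : E → E} {K : ℝ}
    (hβ : ∀ x y, ‖β x - β y‖ ≤ K * ‖x - y‖) (x : E) : ‖β x‖ ≤ K * ‖x‖ + ‖β 0‖ := by
  have h := hβ x 0
  rw [sub_zero] at h
  linarith [norm_sub_norm_le (β x) (β 0)]

theorem Monotone.forall_mem_Icc_of_forall_mem_Ioc {α : Type*} [LinearOrder α] {N : ℕ}
    {s : Fin (N + 1) → α} (hs : Monotone s) {P : α → Prop} (h0 : P (s 0))
    (hstep : ∀ k : Fin N, P (s k.castSucc) → ∀ v ∈ Ioc (s k.castSucc) (s k.succ), P v) :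
    ∀ v ∈ Icc (s 0) (s (Fin.last N)), P v := by
  suffices ∀ i, ∀ v ∈ Icc (s 0) (s i), P v from this _
  refine Fin.induction ?_ fun k ih v hv => ?_
  · rintro v ⟨h₁, h₂⟩
    rwa [le_antisymm h₂ h₁]
  · rcases le_or_gt v (s k.castSucc) with hle | hlt
    · exact ih v ⟨hv.1, hle⟩
    · exact hstep k (ih _ ⟨hs (Fin.zero_le _), le_rfl⟩) v ⟨hlt, hv.2⟩

section EulerScheme

variable {E : Type*} [NormedAddCommGroup E] [NormedSpace ℝ E]

def IsEulerScheme {N : ℕ} (β : E → E) (s : Fin (N + 1) → ℝ) (ω X : ℝ → E) : Prop :=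
  ∀ k : Fin N, ∀ v ∈ Ioc (s k.castSucc) (s k.succ),
    X v = X (s k.castSucc) - (v - s k.castSucc) • β (X (s k.castSucc)) + ω v - ω (s k.castSucc)

theorem norm_sub_smul_le_of_le_exp {K b C W t h T : ℝ} {x y c : E} (hK : 0 ≤ K) (hb : 0 ≤ b)
    (hh : 0 ≤ h) (htT : t ≤ T) (hy : ‖y‖ ≤ C * exp (K * t) - W - b * (T - t))
    (hx : ‖x‖ ≤ ‖y‖ + W) (hc : ‖c‖ ≤ K * ‖x‖ + b) :
    ‖y - h • c‖ ≤ C * exp (K * (t + h)) - W - b * (T - (t + h)) := by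
  have hxC : ‖x‖ ≤ C * exp (K * t) := by nlinarith
  have hC : 0 ≤ C := (mul_nonneg_iff_of_pos_right (exp_pos _)).1 ((norm_nonneg x).trans hxC)
  have hexp : K * h * exp (K * t) ≤ exp (K * (t + h)) - exp (K * t) := by
    rw [mul_add, exp_add]
    nlinarith [add_one_le_exp (K * h), exp_pos (K * t)]
  calc ‖y - h • c‖ ≤ ‖y‖ + h * ‖c‖ := by
        simpa [norm_smul, Real.norm_of_nonneg hh] using norm_sub_le y (h • c)
    _ ≤ ‖y‖ + h * (K * (C * exp (K * t)) + b) := by gcongr; exact hc.trans (by gcongr)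
    _ ≤ _ := by nlinarith [mul_le_mul_of_nonneg_left hexp hC]

namespace IsEulerScheme

variable {N : ℕ} {β : E → E} {s : Fin (N + 1) → ℝ} {ω X : ℝ → E}

theorem sub_eq (hX : IsEulerScheme β s ω X) (k : Fin N) {v : ℝ}
    (hv : v ∈ Icc (s k.castSucc) (s k.succ)) :
    X v - ω v =
      X (s k.castSucc) - ω (s k.castSucc) - (v - s k.castSucc) • β (X (s k.castSucc)) := by
  rcases hv.1.eq_or_lt with rfl | hlt
  · simp
  · rw [hX k v ⟨hlt, hv.2⟩]
    abel

variable {K W T : ℝ}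

theorem norm_sub_le_exp (hX : IsEulerScheme β s ω X) (hK : 0 ≤ K)
    (hβ : ∀ x y, ‖β x - β y‖ ≤ K * ‖x - y‖) (hs : Monotone s) (hs0 : s 0 = 0)
    (hsT : s (Fin.last N) = T) (hω : ∀ v ∈ Icc 0 T, ‖ω v‖ ≤ W) :
    ∀ v ∈ Icc 0 T, ‖X v - ω v‖ ≤
      (‖X 0‖ + ‖β 0‖ * T + 2 * W) * exp (K * v) - W - ‖β 0‖ * (T - v) := by
  have hnode : ∀ k, s k ∈ Icc 0 T := fun k =>
    ⟨hs0 ▸ hs (Fin.zero_le k), hsT ▸ hs (Fin.le_last k)⟩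
  rw [show Icc 0 T = Icc (s 0) (s (Fin.last N)) by rw [hs0, hsT]]
  refine hs.forall_mem_Icc_of_forall_mem_Ioc ?_ fun k ih v hv => ?_
  · rw [hs0, mul_zero, exp_zero, mul_one, sub_zero]
    linarith [norm_sub_le (X 0) (ω 0), hω 0 (hs0 ▸ hnode 0)]
  · have hk := hnode k.castSucc
    have h := norm_sub_smul_le_of_le_exp (x := X (s k.castSucc)) hK (norm_nonneg _)
      (sub_nonneg.2 hv.1.le) hk.2 ih
      (by linarith [norm_le_norm_sub_add (X (s k.castSucc)) (ω (s k.castSucc)), hω _ hk])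
      (norm_le_mul_norm_add_norm_zero hβ _)
    rwa [add_sub_cancel, ← hX.sub_eq k (Ioc_subset_Icc_self hv)] at h

theorem norm_le (hX : IsEulerScheme β s ω X) (hK : 0 ≤ K)
    (hβ : ∀ x y, ‖β x - β y‖ ≤ K * ‖x - y‖) (hs : Monotone s) (hs0 : s 0 = 0)
    (hsT : s (Fin.last N) = T) (hω : ∀ v ∈ Icc 0 T, ‖ω v‖ ≤ W) :
    ∀ v ∈ Icc 0 T, ‖X v‖ ≤ exp (K * T) * (‖X 0‖ + ‖β 0‖ * T + 2 * W) := by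
  intro v hv
  have hY := hX.norm_sub_le_exp hK hβ hs hs0 hsT hω v hv
  have hXv : ‖X v‖ ≤ (‖X 0‖ + ‖β 0‖ * T + 2 * W) * exp (K * v) := by
    nlinarith [norm_le_norm_sub_add (X v) (ω v), hω v hv, norm_nonneg (β 0), hv.2]
  have hC : 0 ≤ ‖X 0‖ + ‖β 0‖ * T + 2 * W :=
    (mul_nonneg_iff_of_pos_right (exp_pos _)).1 ((norm_nonneg _).trans hXv)
  calc ‖X v‖ ≤ (‖X 0‖ + ‖β 0‖ * T + 2 * W) * exp (K * v) := hXv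
    _ ≤ _ := by rw [mul_comm]; gcongr; exact hv.2

theorem norm_sub_sub_le (hX : IsEulerScheme β s ω X) (hs : Monotone s) {L : ℝ}
    (hL : ∀ k : Fin N, ‖β (X (s k.castSucc))‖ ≤ L) :
    ∀ b ∈ Icc (s 0) (s (Fin.last N)), ∀ a ∈ Icc (s 0) b,
      ‖(X b - ω b) - (X a - ω a)‖ ≤ L * (b - a) := by
  refine hs.forall_mem_Icc_of_forall_mem_Ioc ?_ fun k ih b hb a ha => ?_
  · rintro a ⟨h₁, h₂⟩
    simp [le_antisymm h₂ h₁]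
  · have hseg := hX.sub_eq k (Ioc_subset_Icc_self hb)
    rcases le_or_gt a (s k.castSucc) with hak | hka
    · have hbk : ‖(X b - ω b) - (X (s k.castSucc) - ω (s k.castSucc))‖ ≤
          L * (b - s k.castSucc) := by
        rw [hseg, sub_sub_cancel_left, norm_neg, norm_smul,
          Real.norm_of_nonneg (sub_nonneg.2 hb.1.le), mul_comm L]
        exact mul_le_mul_of_nonneg_left (hL k) (sub_nonneg.2 hb.1.le)
      calc _ ≤ ‖(X b - ω b) - (X (s k.castSucc) - ω (s k.castSucc))‖ +
            ‖(X (s k.castSucc) - ω (s k.castSucc)) - (X a - ω a)‖ :=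
            norm_sub_le_norm_sub_add_norm_sub _ _ _
        _ ≤ L * (b - s k.castSucc) + L * (s k.castSucc - a) :=
            add_le_add hbk (ih a ⟨ha.1, hak⟩)
        _ = L * (b - a) := by ring
    · rw [hseg, hX.sub_eq k ⟨hka.le, ha.2.trans hb.2⟩, sub_sub_sub_cancel_left, ← sub_smul,
        sub_sub_sub_cancel_right, norm_smul, norm_sub_rev, Real.norm_of_nonneg (sub_nonneg.2 ha.2),
        mul_comm L]
      exact mul_le_mul_of_nonneg_left (hL k) (sub_nonneg.2 ha.2)

end IsEulerScheme

end EulerScheme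

theorem stmt8_general (n : ℕ) (T : ℝ) (Kβ : ℝ) (hKβ : 0 ≤ Kβ)
    (β : EuclideanSpace ℝ (Fin n) → EuclideanSpace ℝ (Fin n))
    (hβ : ∀ x y, ‖β x - β y‖ ≤ Kβ * ‖x - y‖)
    (N : ℕ) (s : Fin (N + 1) → ℝ) (hs0 : s 0 = 0) (hsT : s (Fin.last N) = T)
    (hsm : StrictMono s)
    (ωh : ℝ → EuclideanSpace ℝ (Fin n)) (hω : ContinuousOn ωh (Set.Icc 0 T))
    (xN : EuclideanSpace ℝ (Fin n))
    (Xh : ℝ → EuclideanSpace ℝ (Fin n)) (hX0 : Xh 0 = xN)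
    (hXrec : ∀ k : Fin N, ∀ v ∈ Set.Ioc (s k.castSucc) (s k.succ),
      Xh v = Xh (s k.castSucc) - (v - s k.castSucc) • β (Xh (s k.castSucc))
        + ωh v - ωh (s k.castSucc)) :
    supNorm T Xh ≤ Real.exp (Kβ * T) * (‖xN‖ + ‖β 0‖ * T + 2 * supNorm T ωh) ∧
    ∀ δ : ℝ, 0 < δ → δ ≤ T →
      modCont T δ Xh ≤ (Kβ * supNorm T Xh + ‖β 0‖) * δ + modCont T δ ωh := by
  have hX : IsEulerScheme β s ωh Xh := hXrec
  have hs := hsm.monotone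
  have hT : 0 ≤ T := hs0 ▸ hsT ▸ hs (Fin.zero_le _)
  have hωb : IsBounded (ωh '' Icc 0 T) := (isCompact_Icc.image_of_continuousOn hω).isBounded
  have hXC := hX0 ▸ hX.norm_le hKβ hβ hs hs0 hsT fun v hv => norm_le_supNorm hωb hv
  refine ⟨supNorm_le hT hXC, fun δ hδ _ => ?_⟩
  have hXb : IsBounded (Xh '' Icc 0 T) :=
    isBounded_iff_forall_norm_le.2 ⟨_, forall_mem_image.2 hXC⟩
  have hβX : ∀ k : Fin N, ‖β (Xh (s k.castSucc))‖ ≤ Kβ * supNorm T Xh + ‖β 0‖ := fun k =>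
    (norm_le_mul_norm_add_norm_zero hβ _).trans <| by
      gcongr
      exact norm_le_supNorm hXb ⟨hs0 ▸ hs (Fin.zero_le _), hsT ▸ hs (Fin.le_last _)⟩
  set L := Kβ * supNorm T Xh + ‖β 0‖
  have hL : 0 ≤ L := add_nonneg (mul_nonneg hKβ supNorm_nonneg) (norm_nonneg _)
  refine modCont_le (add_nonneg (mul_nonneg hL hδ.le) modCont_nonneg)
    fun σ u hσ hu huδ hσu => ?_
  have hY := hX.norm_sub_sub_le hs hβX (σ + u) (by rw [hs0, hsT]; constructor <;> linarith) σ
    (by rw [hs0]; constructor <;> linarith)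
  calc ‖Xh (σ + u) - Xh σ‖
      = ‖((Xh (σ + u) - ωh (σ + u)) - (Xh σ - ωh σ)) + (ωh (σ + u) - ωh σ)‖ := by
        congr 1; abel
    _ ≤ L * (σ + u - σ) + modCont T δ ωh :=
        (norm_add_le _ _).trans (add_le_add hY (norm_sub_le_modCont hωb hσ hu huδ hσu))
    _ ≤ L * δ + modCont T δ ωh := by
        linarith [mul_le_mul_of_nonneg_left (show σ + u - σ ≤ δ by linarith) hL]

/-- Lemma 4.1: uniform boundedness and equicontinuity of the explicit Euler
approximation of the backward drifting Brownian motion. -/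
theorem stmt8 (n : ℕ) (T : ℝ) (hT : 0 < T) (Kβ : ℝ) (hKβ : 0 ≤ Kβ)
    (β : EuclideanSpace ℝ (Fin n) → EuclideanSpace ℝ (Fin n))
    (hβ : ∀ x y, ‖β x - β y‖ ≤ Kβ * ‖x - y‖)
    (N : ℕ) (s : Fin (N + 1) → ℝ) (hs0 : s 0 = 0) (hsT : s (Fin.last N) = T)
    (hsm : StrictMono s)
    (ωh : ℝ → EuclideanSpace ℝ (Fin n)) (hω : ContinuousOn ωh (Set.Icc 0 T))
    (xN : EuclideanSpace ℝ (Fin n))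
    (Xh : ℝ → EuclideanSpace ℝ (Fin n)) (hX0 : Xh 0 = xN)
    (hXrec : ∀ k : Fin N, ∀ v ∈ Set.Ioc (s k.castSucc) (s k.succ),
      Xh v = Xh (s k.castSucc) - (v - s k.castSucc) • β (Xh (s k.castSucc))
        + ωh v - ωh (s k.castSucc)) :
    supNorm T Xh ≤ Real.exp (Kβ * T) * (‖xN‖ + ‖β 0‖ * T + 2 * supNorm T ωh) ∧
    ∀ δ : ℝ, 0 < δ → δ ≤ T →
      modCont T δ Xh ≤ (Kβ * supNorm T Xh + ‖β 0‖) * δ + modCont T δ ωh :=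
  stmt8_general n T Kβ hKβ β hβ N s hs0 hsT hsm ωh hω xN Xh hX0 hXrec
end

section
/- Let T > 0, let β : ℝⁿ → ℝⁿ be Lipschitz with constant K_β, let 0 = t₀ < t₁ < ⋯ < t_N = T satisfy K_β (t_j − t_{j−1}) ≤ 1/2 for every j, let ω : [0,T] → ℝⁿ be continuous, let x_N ∈ ℝⁿ and δ ∈ (0,T], and suppose X_N : [0,T] → ℝⁿ satisfies the implicit Euler relation X_N(t) = x_N + Σ_{j=1}^N β(X_N(t_j)) · max( min( t − t_{j−1}, t_j − t_{j−1} ), 0 ) + ω(t) − ω(0) for all t ∈ [0,T]. Then: (a) max_{0≤j≤N} ‖X_N(t_j)‖ ≤ 2 e^{2 K_β T} ( ‖x_N‖ + ‖β(0)‖ T + 2 ‖ω‖_T ); (b) ‖X_N‖_T ≤ ‖x_N‖ + 2 ‖ω‖_T + ( ‖β(0)‖ + K_β max_{0≤j≤N} ‖X_N(t_j)‖ ) T; (c) Δ_δ X_N ≤ ( ‖β(0)‖ + K_β max_{0≤j≤N} ‖X_N(t_j)‖ ) δ + Δ_δ ω. -/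
open MeasureTheory

private lemma fin_telescope : ∀ {M : ℕ} (g : Fin (M + 1) → ℝ),
    ∑ j : Fin M, (g j.succ - g j.castSucc) = g (Fin.last M) - g 0 := by
  intro M
  induction M with
  | zero => intro g; simp
  | succ m ih =>
    intro g
    rw [Fin.sum_univ_castSucc]
    have h1 : ∀ j : Fin m, g (j.castSucc).succ - g (j.castSucc).castSucc
        = (fun k : Fin (m + 1) => g k.castSucc) j.succ
          - (fun k : Fin (m + 1) => g k.castSucc) j.castSucc := by
      intro j
      simp [-Fin.castSucc_succ, Fin.succ_castSucc]
    rw [Finset.sum_congr rfl (fun j _ => h1 j), ih (fun k : Fin (m + 1) => g k.castSucc)]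
    simp [Fin.succ_last]

set_option maxHeartbeats 1000000 in
/-- Lemma 4.2: bounds on the implicit Euler scheme of the forward process. -/
theorem stmt10 (n : ℕ) (T : ℝ) (hT : 0 < T) (Kβ : ℝ) (hKβ : 0 ≤ Kβ)
    (β : EuclideanSpace ℝ (Fin n) → EuclideanSpace ℝ (Fin n))
    (hβ : ∀ x y, ‖β x - β y‖ ≤ Kβ * ‖x - y‖)
    (N : ℕ) (t : Fin (N + 1) → ℝ) (ht0 : t 0 = 0) (htT : t (Fin.last N) = T)
    (htm : StrictMono t)
    (hstep : ∀ j : Fin N, Kβ * (t j.succ - t j.castSucc) ≤ 1 / 2)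
    (ω : ℝ → EuclideanSpace ℝ (Fin n)) (hω : ContinuousOn ω (Set.Icc 0 T))
    (xN : EuclideanSpace ℝ (Fin n)) (δ : ℝ) (hδ : 0 < δ) (hδT : δ ≤ T)
    (X : ℝ → EuclideanSpace ℝ (Fin n))
    (hX : ∀ v ∈ Set.Icc (0 : ℝ) T,
      X v = xN + (∑ j : Fin N,
          (max (min (v - t j.castSucc) (t j.succ - t j.castSucc)) 0) • β (X (t j.succ)))
        + ω v - ω 0) :
    (⨆ j : Fin (N + 1), ‖X (t j)‖)
        ≤ 2 * Real.exp (2 * Kβ * T) * (‖xN‖ + ‖β 0‖ * T + 2 * supNorm T ω) ∧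
    supNorm T X
        ≤ ‖xN‖ + 2 * supNorm T ω + (‖β 0‖ + Kβ * ⨆ j : Fin (N + 1), ‖X (t j)‖) * T ∧
    modCont T δ X
        ≤ (‖β 0‖ + Kβ * ⨆ j : Fin (N + 1), ‖X (t j)‖) * δ + modCont T δ ω := by
  have htmono := htm.monotone
  have ht_nonneg : ∀ j : Fin (N + 1), 0 ≤ t j := by
    intro j; rw [← ht0]; exact htmono (Fin.zero_le j)
  have ht_leT : ∀ j : Fin (N + 1), t j ≤ T := by
    intro j; rw [← htT]; exact htmono (Fin.le_last j)
  have hstep_pos : ∀ j : Fin N, 0 ≤ t j.succ - t j.castSucc := by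
    intro j; have := htm (show j.castSucc < j.succ from Fin.castSucc_lt_succ); linarith
  set c : Fin N → ℝ → ℝ :=
    fun j v => max (min (v - t j.castSucc) (t j.succ - t j.castSucc)) 0 with hc
  have hc_nonneg : ∀ j v, 0 ≤ c j v := by
    intro j v; simp only [hc]; exact le_max_right _ _
  have hXc : ∀ v ∈ Set.Icc (0 : ℝ) T,
      X v = xN + (∑ j : Fin N, c j v • β (X (t j.succ))) + ω v - ω 0 := by
    intro v hv
    simp only [hc]
    exact hX v hv
  have hc_eq : ∀ (j : Fin N) (v : ℝ), c j v = min v (t j.succ) - min v (t j.castSucc) := by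
    intro j v
    have hcs : t j.castSucc ≤ t j.succ := (htm (show j.castSucc < j.succ from Fin.castSucc_lt_succ)).le
    simp only [hc]
    rcases le_total v (t j.castSucc) with h1 | h1 <;> rcases le_total v (t j.succ) with h2 | h2 <;>
      simp [min_def, max_def] <;> split_ifs <;> linarith
  have hc_mono : ∀ (j : Fin N) (v w : ℝ), v ≤ w → c j v ≤ c j w := by
    intro j v w hvw
    simp only [hc]
    exact max_le_max (min_le_min (by linarith) le_rfl) le_rfl
  have hsum_c : ∀ v : ℝ, 0 ≤ v → v ≤ T → ∑ j : Fin N, c j v = v := by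
    intro v h0 hTv
    have h1 : ∀ j : Fin N, c j v = (fun k : Fin (N + 1) => min v (t k)) j.succ
        - (fun k : Fin (N + 1) => min v (t k)) j.castSucc := fun j => hc_eq j v
    rw [Finset.sum_congr rfl fun j _ => h1 j, fin_telescope (fun k : Fin (N + 1) => min v (t k))]
    simp only [htT, ht0]
    rw [min_eq_left hTv, min_eq_right h0, sub_zero]
  have hsum_h : ∑ j : Fin N, (t j.succ - t j.castSucc) = T := by
    rw [fin_telescope (fun k => t k), htT, ht0, sub_zero]
  -- ω bounds
  obtain ⟨Cω, hCω⟩ := isCompact_Icc.exists_bound_of_continuousOn hω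
  have hsupω_bdd : BddAbove (Set.range fun u : Set.Icc (0 : ℝ) T => ‖ω u.1‖) := by
    refine ⟨Cω, ?_⟩
    rintro r ⟨u, rfl⟩
    exact hCω u.1 u.2
  haveI hIccNe : Nonempty (Set.Icc (0 : ℝ) T) := ⟨⟨0, le_rfl, hT.le⟩⟩
  have hω_le : ∀ v ∈ Set.Icc (0 : ℝ) T, ‖ω v‖ ≤ supNorm T ω := by
    intro v hv
    exact le_ciSup hsupω_bdd (⟨v, hv⟩ : Set.Icc (0 : ℝ) T)
  have hsupω_nonneg : 0 ≤ supNorm T ω := Real.iSup_nonneg fun u => norm_nonneg _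
  set M : ℝ := ⨆ j : Fin (N + 1), ‖X (t j)‖ with hM
  have ha_le_M : ∀ k : Fin (N + 1), ‖X (t k)‖ ≤ M := by
    intro k
    rw [hM]
    exact le_ciSup (f := fun j : Fin (N + 1) => ‖X (t j)‖) ((Set.finite_range _).bddAbove) k
  have hM_nonneg : 0 ≤ M := by
    rw [hM]; exact Real.iSup_nonneg fun j => norm_nonneg _
  set A : ℝ := ‖xN‖ + ‖β 0‖ * T + 2 * supNorm T ω with hA
  have hβ0T : 0 ≤ ‖β 0‖ * T := mul_nonneg (norm_nonneg _) hT.le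
  have hA_nonneg : 0 ≤ A := by
    rw [hA]
    have := norm_nonneg xN
    linarith
  have hxN_le_A : ‖xN‖ ≤ A := by rw [hA]; linarith
  have hβ_bd : ∀ x, ‖β x‖ ≤ ‖β 0‖ + Kβ * ‖x‖ := by
    intro x
    have h1 := hβ x 0
    have h2 := norm_sub_norm_le (β x) (β 0)
    rw [sub_zero] at h1
    linarith
  have hβM : ∀ j : Fin N, ‖β (X (t j.succ))‖ ≤ ‖β 0‖ + Kβ * M := by
    intro j
    have h1 := hβ_bd (X (t j.succ))
    have h2 := ha_le_M j.succ
    nlinarith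
  have hBnn : 0 ≤ ‖β 0‖ + Kβ * M := by
    have := norm_nonneg (β 0)
    nlinarith
  -- node values of c
  have hc_node : ∀ (k : Fin N) (j : Fin N),
      c j (t k.succ) = if (j : ℕ) < (k : ℕ) + 1 then t j.succ - t j.castSucc else 0 := by
    intro k j
    have hcs : t j.castSucc ≤ t j.succ := (htm (show j.castSucc < j.succ from Fin.castSucc_lt_succ)).le
    by_cases hjk : (j : ℕ) < (k : ℕ) + 1
    · rw [if_pos hjk]
      have hle : t j.succ ≤ t k.succ := by
        refine htmono ?_
        rw [Fin.le_def, Fin.val_succ, Fin.val_succ]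
        omega
      simp only [hc]
      rw [min_eq_right (by linarith), max_eq_left (by linarith)]
    · rw [if_neg hjk]
      have hle : t k.succ ≤ t j.castSucc := by
        refine htmono ?_
        rw [Fin.le_def, Fin.val_succ, Fin.coe_castSucc]
        omega
      simp only [hc]
      rw [max_eq_right]
      exact min_le_of_left_le (by linarith)
  -- generic bound on ‖X v‖
  have hXbound : ∀ v ∈ Set.Icc (0 : ℝ) T,
      ‖X v‖ ≤ ‖xN‖ + (∑ j : Fin N, c j v * ‖β (X (t j.succ))‖) + 2 * supNorm T ω := by
    intro v hv
    rw [hXc v hv]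
    have h1 : ‖∑ j : Fin N, c j v • β (X (t j.succ))‖
        ≤ ∑ j : Fin N, c j v * ‖β (X (t j.succ))‖ := by
      refine (norm_sum_le _ _).trans (Finset.sum_le_sum fun j _ => ?_)
      rw [norm_smul, Real.norm_eq_abs, abs_of_nonneg (hc_nonneg j v)]
    have h2 := hω_le v hv
    have h3 := hω_le 0 ⟨le_rfl, hT.le⟩
    have h4 := norm_sub_le (xN + (∑ j : Fin N, c j v • β (X (t j.succ))) + ω v) (ω 0)
    have h5 := norm_add_le (xN + (∑ j : Fin N, c j v • β (X (t j.succ)))) (ω v)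
    have h6 := norm_add_le xN (∑ j : Fin N, c j v • β (X (t j.succ)))
    linarith
  -- splitting sums with an if
  have hsplit : ∀ (k : Fin N) (f : Fin N → ℝ),
      ∑ j : Fin N, (if (j : ℕ) < (k : ℕ) + 1 then f j else 0)
        = (∑ j : Fin N, (if (j : ℕ) < (k : ℕ) then f j else 0)) + f k := by
    intro k f
    have h1 : ∀ j : Fin N, (if (j : ℕ) < (k : ℕ) + 1 then f j else 0)
        = (if (j : ℕ) < (k : ℕ) then f j else 0) + (if j = k then f j else 0) := by
      intro j
      rcases Nat.lt_trichotomy (j : ℕ) (k : ℕ) with h | h | h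
      · rw [if_pos (by omega), if_pos h, if_neg (fun he => by subst he; omega)]
        ring
      · have hjk : j = k := Fin.ext h
        subst hjk
        rw [if_pos (by omega), if_neg (by omega), if_pos rfl]
        ring
      · rw [if_neg (by omega), if_neg (by omega), if_neg (fun he => by subst he; omega)]
        ring
    rw [Finset.sum_congr rfl fun j _ => h1 j, Finset.sum_add_distrib,
      Finset.sum_ite_eq' Finset.univ k f]
    simp
  -- the key recursion estimate
  have hkey : ∀ k : Fin N, ‖X (t k.succ)‖ ≤ 2 * A + ∑ j : Fin N,
      (if (j : ℕ) < (k : ℕ) then 2 * Kβ * (t j.succ - t j.castSucc) * ‖X (t j.succ)‖ else 0) := by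
    intro k
    have hv : t k.succ ∈ Set.Icc (0 : ℝ) T := ⟨ht_nonneg _, ht_leT _⟩
    have h0 := hXbound (t k.succ) hv
    have h1 : ∑ j : Fin N, c j (t k.succ) * ‖β (X (t j.succ))‖
        ≤ ∑ j : Fin N, (if (j : ℕ) < (k : ℕ) + 1 then
            (t j.succ - t j.castSucc) * ‖β 0‖
              + Kβ * (t j.succ - t j.castSucc) * ‖X (t j.succ)‖ else 0) := by
      refine Finset.sum_le_sum fun j _ => ?_
      rw [hc_node k j]
      by_cases hjk : (j : ℕ) < (k : ℕ) + 1
      · rw [if_pos hjk, if_pos hjk]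
        have hb := hβ_bd (X (t j.succ))
        have hj := hstep_pos j
        nlinarith [norm_nonneg (β (X (t j.succ))), norm_nonneg (X (t j.succ))]
      · rw [if_neg hjk, if_neg hjk]
        simp
    have h2 : ∑ j : Fin N, (if (j : ℕ) < (k : ℕ) + 1 then
            (t j.succ - t j.castSucc) * ‖β 0‖
              + Kβ * (t j.succ - t j.castSucc) * ‖X (t j.succ)‖ else 0)
        = (∑ j : Fin N, (if (j : ℕ) < (k : ℕ) + 1 then
            (t j.succ - t j.castSucc) * ‖β 0‖ else 0))
          + ∑ j : Fin N, (if (j : ℕ) < (k : ℕ) + 1 then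
            Kβ * (t j.succ - t j.castSucc) * ‖X (t j.succ)‖ else 0) := by
      rw [← Finset.sum_add_distrib]
      refine Finset.sum_congr rfl fun j _ => ?_
      split_ifs <;> ring
    have h3 : (∑ j : Fin N, (if (j : ℕ) < (k : ℕ) + 1 then
          (t j.succ - t j.castSucc) * ‖β 0‖ else 0)) ≤ ‖β 0‖ * T := by
      have hle : ∀ j : Fin N, (if (j : ℕ) < (k : ℕ) + 1 then
          (t j.succ - t j.castSucc) * ‖β 0‖ else 0) ≤ (t j.succ - t j.castSucc) * ‖β 0‖ := by
        intro j
        split_ifs with h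
        · exact le_rfl
        · exact mul_nonneg (hstep_pos j) (norm_nonneg _)
      calc (∑ j : Fin N, (if (j : ℕ) < (k : ℕ) + 1 then
            (t j.succ - t j.castSucc) * ‖β 0‖ else 0))
          ≤ ∑ j : Fin N, (t j.succ - t j.castSucc) * ‖β 0‖ := Finset.sum_le_sum fun j _ => hle j
        _ = ‖β 0‖ * T := by rw [← Finset.sum_mul, hsum_h, mul_comm]
    have h4 : ∑ j : Fin N, (if (j : ℕ) < (k : ℕ) + 1 then
          Kβ * (t j.succ - t j.castSucc) * ‖X (t j.succ)‖ else 0)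
        = (∑ j : Fin N, (if (j : ℕ) < (k : ℕ) then
            Kβ * (t j.succ - t j.castSucc) * ‖X (t j.succ)‖ else 0))
          + Kβ * (t k.succ - t k.castSucc) * ‖X (t k.succ)‖ :=
      hsplit k _
    have h5 : Kβ * (t k.succ - t k.castSucc) * ‖X (t k.succ)‖ ≤ (1 / 2) * ‖X (t k.succ)‖ :=
      mul_le_mul_of_nonneg_right (hstep k) (norm_nonneg _)
    have h6 : ∑ j : Fin N,
          (if (j : ℕ) < (k : ℕ) then 2 * Kβ * (t j.succ - t j.castSucc) * ‖X (t j.succ)‖ else 0)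
        = 2 * ∑ j : Fin N,
          (if (j : ℕ) < (k : ℕ) then Kβ * (t j.succ - t j.castSucc) * ‖X (t j.succ)‖ else 0) := by
      rw [Finset.mul_sum]
      refine Finset.sum_congr rfl fun j _ => ?_
      split_ifs <;> ring
    linarith
  -- Gronwall
  have hGron : ∀ k : Fin (N + 1),
      2 * A + (∑ j : Fin N, (if (j : ℕ) < (k : ℕ) then
          2 * Kβ * (t j.succ - t j.castSucc) * ‖X (t j.succ)‖ else 0))
        ≤ 2 * A * Real.exp (2 * Kβ * t k) := by
    intro k
    induction k using Fin.induction with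
    | zero => simp [ht0]
    | succ i ih =>
      have hsp := hsplit i (fun j => 2 * Kβ * (t j.succ - t j.castSucc) * ‖X (t j.succ)‖)
      rw [Fin.coe_castSucc] at ih
      rw [Fin.val_succ, hsp, ← add_assoc]
      set P : ℝ := 2 * A + ∑ j : Fin N, (if (j : ℕ) < (i : ℕ) then
          2 * Kβ * (t j.succ - t j.castSucc) * ‖X (t j.succ)‖ else 0) with hP
      have hb := hkey i
      have hh := hstep_pos i
      have h2kh : 0 ≤ 2 * Kβ * (t i.succ - t i.castSucc) := by positivity
      have hterm : 2 * Kβ * (t i.succ - t i.castSucc) * ‖X (t i.succ)‖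
          ≤ 2 * Kβ * (t i.succ - t i.castSucc) * P := by
        exact mul_le_mul_of_nonneg_left hb h2kh
      have hexp : 1 + 2 * Kβ * (t i.succ - t i.castSucc)
          ≤ Real.exp (2 * Kβ * (t i.succ - t i.castSucc)) := by
        linarith [Real.add_one_le_exp (2 * Kβ * (t i.succ - t i.castSucc))]
      have hE : 2 * A * Real.exp (2 * Kβ * t i.castSucc)
            * Real.exp (2 * Kβ * (t i.succ - t i.castSucc))
          = 2 * A * Real.exp (2 * Kβ * t i.succ) := by
        rw [mul_assoc, ← Real.exp_add]
        congr 1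
        ring
      have hEnn : 0 ≤ 2 * A * Real.exp (2 * Kβ * t i.castSucc) :=
        mul_nonneg (by linarith) (Real.exp_nonneg _)
      calc P + 2 * Kβ * (t i.succ - t i.castSucc) * ‖X (t i.succ)‖
          ≤ P + 2 * Kβ * (t i.succ - t i.castSucc) * P := by linarith
        _ = P * (1 + 2 * Kβ * (t i.succ - t i.castSucc)) := by ring
        _ ≤ (2 * A * Real.exp (2 * Kβ * t i.castSucc))
              * Real.exp (2 * Kβ * (t i.succ - t i.castSucc)) := by
            refine mul_le_mul ih hexp (by linarith) hEnn
        _ = 2 * A * Real.exp (2 * Kβ * t i.succ) := hE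
  have hX0 : X 0 = xN := by
    have h := hX 0 ⟨le_rfl, hT.le⟩
    have hz : ∀ j : Fin N,
        max (min ((0 : ℝ) - t j.castSucc) (t j.succ - t j.castSucc)) 0 = 0 := by
      intro j
      have h1 := ht_nonneg j.castSucc
      have h2 := hstep_pos j
      rw [max_eq_right]
      exact min_le_of_left_le (by linarith)
    simp only [hz, zero_smul, Finset.sum_const_zero, add_zero] at h
    simpa using h
  have hexpT : (1 : ℝ) ≤ Real.exp (2 * Kβ * T) := Real.one_le_exp (by positivity)
  have haM : ∀ k : Fin (N + 1), ‖X (t k)‖ ≤ 2 * Real.exp (2 * Kβ * T) * A := by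
    intro k
    induction k using Fin.cases with
    | zero =>
      rw [ht0, hX0]
      nlinarith [mul_le_mul_of_nonneg_right hexpT hA_nonneg, hxN_le_A, hA_nonneg]
    | succ i =>
      have hg := hGron i.castSucc
      rw [Fin.coe_castSucc] at hg
      have h1 := (hkey i).trans hg
      have h2 : Real.exp (2 * Kβ * t i.castSucc) ≤ Real.exp (2 * Kβ * T) := by
        apply Real.exp_le_exp.2
        have := ht_leT i.castSucc
        nlinarith
      nlinarith [mul_le_mul_of_nonneg_right h2 hA_nonneg, Real.exp_nonneg (2 * Kβ * t i.castSucc)]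
  have partA : M ≤ 2 * Real.exp (2 * Kβ * T) * A := by
    rw [hM]
    exact ciSup_le haM
  -- part (b)
  have hXv : ∀ v ∈ Set.Icc (0 : ℝ) T,
      ‖X v‖ ≤ ‖xN‖ + 2 * supNorm T ω + (‖β 0‖ + Kβ * M) * T := by
    intro v hv
    have h0 := hXbound v hv
    have h1 : ∑ j : Fin N, c j v * ‖β (X (t j.succ))‖
        ≤ ∑ j : Fin N, c j v * (‖β 0‖ + Kβ * M) :=
      Finset.sum_le_sum fun j _ => mul_le_mul_of_nonneg_left (hβM j) (hc_nonneg j v)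
    have h2 : ∑ j : Fin N, c j v * (‖β 0‖ + Kβ * M) = v * (‖β 0‖ + Kβ * M) := by
      rw [← Finset.sum_mul, hsum_c v hv.1 hv.2]
    have h3 : v * (‖β 0‖ + Kβ * M) ≤ (‖β 0‖ + Kβ * M) * T := by
      rw [mul_comm v (‖β 0‖ + Kβ * M)]
      exact mul_le_mul_of_nonneg_left hv.2 hBnn
    linarith
  have partB : supNorm T X ≤ ‖xN‖ + 2 * supNorm T ω + (‖β 0‖ + Kβ * M) * T := by
    show (⨆ u : Set.Icc (0 : ℝ) T, ‖X u.1‖) ≤ _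
    exact ciSup_le fun u => hXv u.1 u.2
  -- part (c)
  have hmodω_bdd : BddAbove {r | ∃ s u : ℝ,
      0 ≤ s ∧ 0 < u ∧ u ≤ δ ∧ s + u ≤ T ∧ r = ‖ω (s + u) - ω s‖} := by
    refine ⟨2 * Cω, ?_⟩
    rintro r ⟨s, u, hs, hu, huδ, hsu, rfl⟩
    have h1 := hCω (s + u) ⟨by linarith, hsu⟩
    have h2 := hCω s ⟨hs, by linarith⟩
    have h3 := norm_sub_le (ω (s + u)) (ω s)
    linarith
  have hωmod : ∀ s u : ℝ, 0 ≤ s → 0 < u → u ≤ δ → s + u ≤ T →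
      ‖ω (s + u) - ω s‖ ≤ modCont T δ ω := by
    intro s u hs hu huδ hsu
    exact le_csSup hmodω_bdd ⟨s, u, hs, hu, huδ, hsu, rfl⟩
  have hXdiff : ∀ s u : ℝ, 0 ≤ s → 0 < u → u ≤ δ → s + u ≤ T →
      ‖X (s + u) - X s‖ ≤ (‖β 0‖ + Kβ * M) * δ + modCont T δ ω := by
    intro s u hs hu huδ hsu
    have hsT : s ∈ Set.Icc (0 : ℝ) T := ⟨hs, by linarith⟩
    have hsuT : s + u ∈ Set.Icc (0 : ℝ) T := ⟨by linarith, hsu⟩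
    have e3 : X (s + u) - X s
        = (∑ j : Fin N, (c j (s + u) - c j s) • β (X (t j.succ))) + (ω (s + u) - ω s) := by
      rw [hXc (s + u) hsuT, hXc s hsT]
      simp only [sub_smul, Finset.sum_sub_distrib]
      abel
    rw [e3]
    have h4 : ‖∑ j : Fin N, (c j (s + u) - c j s) • β (X (t j.succ))‖
        ≤ ∑ j : Fin N, (c j (s + u) - c j s) * (‖β 0‖ + Kβ * M) := by
      refine (norm_sum_le _ _).trans (Finset.sum_le_sum fun j _ => ?_)
      have hmono := hc_mono j s (s + u) (by linarith)
      rw [norm_smul, Real.norm_eq_abs, abs_of_nonneg (by linarith)]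
      exact mul_le_mul_of_nonneg_left (hβM j) (by linarith)
    have h5 : ∑ j : Fin N, (c j (s + u) - c j s) = u := by
      rw [Finset.sum_sub_distrib, hsum_c (s + u) (by linarith) hsu,
        hsum_c s hs (by linarith)]
      ring
    have h6 : ∑ j : Fin N, (c j (s + u) - c j s) * (‖β 0‖ + Kβ * M)
        = u * (‖β 0‖ + Kβ * M) := by
      rw [← Finset.sum_mul, h5]
    have h7 := hωmod s u hs hu huδ hsu
    have h8 := norm_add_le (∑ j : Fin N, (c j (s + u) - c j s) • β (X (t j.succ)))
      (ω (s + u) - ω s)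
    have h9 : u * (‖β 0‖ + Kβ * M) ≤ (‖β 0‖ + Kβ * M) * δ := by
      rw [mul_comm u (‖β 0‖ + Kβ * M)]
      exact mul_le_mul_of_nonneg_left huδ hBnn
    linarith
  have partC : modCont T δ X ≤ (‖β 0‖ + Kβ * M) * δ + modCont T δ ω := by
    show sSup _ ≤ _
    refine csSup_le ⟨‖X (0 + δ) - X 0‖, 0, δ, le_rfl, hδ, le_rfl, by linarith, rfl⟩ ?_
    rintro r ⟨s, u, hs, hu, huδ, hsu, rfl⟩
    exact hXdiff s u hs hu huδ hsu
  exact ⟨partA, partB, partC⟩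
end

section
/- Let β : ℝⁿ → ℝⁿ be Lipschitz with constant K_β, and for t ≥ 0, x ∈ ℝⁿ and continuous ω̂ : [0,t] → ℝⁿ let Φ_t(x, ω̂) denote the time-t value of the unique continuous solution of X̂(s) = x − ∫₀ˢ β(X̂(u)) du + ω̂(s) − ω̂(0) on [0,t]. Fix ω ∈ C([0,∞),ℝⁿ) and a nonempty closed set x* ⊆ ℝⁿ, and define Y*(t) = { z ∈ ℝⁿ : Φ_t(z, ω(t−·)) ∈ x* }. Then for every t ≥ 0 the map z ↦ Φ_t(z, ω(t−·)) is a bijection of ℝⁿ, Y*(t) is nonempty and closed, and Y* is continuous in the Painlevé–Kuratowski sense: (upper semicontinuity) whenever t_N → t₀ and z_N ∈ Y*(t_N) with z_N → z₀, one has z₀ ∈ Y*(t₀); and (lower semicontinuity) whenever t_N → t₀ and z₀ ∈ Y*(t₀), there exist z_N ∈ Y*(t_N) with z_N → z₀. -/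
open Filter MeasureTheory

section FlowHelpers

variable {E : Type*} [NormedAddCommGroup E] [NormedSpace ℝ E] [CompleteSpace E]

omit [NormedSpace ℝ E] [CompleteSpace E] in
lemma stmt13_lip_cont (K : ℝ) (hK : 0 ≤ K) (g : E → E)
    (hg : ∀ a b, ‖g a - g b‖ ≤ K * ‖a - b‖) : Continuous g := by
  have : LipschitzWith (Real.toNNReal K) g := by
    apply LipschitzWith.of_dist_le_mul
    intro a b
    rw [Real.coe_toNNReal K hK, dist_eq_norm, dist_eq_norm]
    exact hg a b
  exact this.continuous

/-- Global existence of solutions of the integral equation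
`X s = y - ∫₀ˢ g (X u) du + h s - h 0` on `[0, T]`, via a contracting iterate of the
Picard map on `C([0,T], E)`. -/
lemma stmt13_sol_exists (K : ℝ) (hK : 0 ≤ K) (g : E → E)
    (hg : ∀ a b, ‖g a - g b‖ ≤ K * ‖a - b‖)
    (T : ℝ) (hT : 0 ≤ T) (h : ℝ → E) (hh : Continuous h) (y : E) :
    ∃ X : ℝ → E, Continuous X ∧
      ∀ s ∈ Set.Icc (0:ℝ) T, X s = y - (∫ u in (0:ℝ)..s, g (X u)) + h s - h 0 := by
  have hgc : Continuous g := stmt13_lip_cont K hK g hg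
  haveI : Nonempty (Set.Icc (0:ℝ) T) := ⟨⟨0, by simp [hT]⟩⟩
  set α := C(Set.Icc (0:ℝ) T, E) with hα
  let ext : α → ℝ → E := fun X u => X (Set.projIcc 0 T hT u)
  have hext_cont : ∀ X : α, Continuous (ext X) := fun X => X.continuous.comp continuous_projIcc
  have hext_eq : ∀ (X : α) (u : ℝ) (hu : u ∈ Set.Icc (0:ℝ) T), ext X u = X ⟨u, hu⟩ := by
    intro X u hu
    simp only [ext, Set.projIcc_of_mem hT hu]
  have hcontT : ∀ X : α, Continuous fun s : ℝ => y - (∫ u in (0:ℝ)..s, g (ext X u)) + h s - h 0 := by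
    intro X
    have : Continuous fun s : ℝ => ∫ u in (0:ℝ)..s, g (ext X u) :=
      intervalIntegral.continuous_primitive
        (fun a b => ((hgc.comp (hext_cont X)).intervalIntegrable a b)) 0
    fun_prop
  let Tm : α → α := fun X =>
    ⟨fun s => y - (∫ u in (0:ℝ)..(s:ℝ), g (ext X u)) + h s - h 0,
      (hcontT X).comp continuous_subtype_val⟩
  have iter_bound : ∀ (m : ℕ) (X Y : α) (s : Set.Icc (0:ℝ) T),
      ‖(Tm^[m] X) s - (Tm^[m] Y) s‖ ≤ dist X Y * (K ^ m * (s:ℝ) ^ m / m.factorial) := by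
    intro m
    induction m with
    | zero =>
      intro X Y s
      simp only [Function.iterate_zero, id_eq, pow_zero, Nat.factorial_zero, Nat.cast_one,
        mul_one, one_div, mul_inv_cancel₀, ← dist_eq_norm]
      simpa using ContinuousMap.dist_apply_le_dist s
    | succ m ih =>
      intro X Y s
      obtain ⟨s, hs0, hsT⟩ := s
      rw [Function.iterate_succ_apply', Function.iterate_succ_apply']
      set A := Tm^[m] X with hA
      set B := Tm^[m] Y with hB
      have hsub : (Tm A) ⟨s, hs0, hsT⟩ - (Tm B) ⟨s, hs0, hsT⟩
          = -(∫ u in (0:ℝ)..s, (g (ext A u) - g (ext B u))) := by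
        show (y - _ + h s - h 0) - (y - _ + h s - h 0) = _
        have hIA : IntervalIntegrable (fun u => g (ext A u)) volume 0 s :=
          Continuous.intervalIntegrable (by fun_prop) 0 s
        have hIB : IntervalIntegrable (fun u => g (ext B u)) volume 0 s :=
          Continuous.intervalIntegrable (by fun_prop) 0 s
        rw [intervalIntegral.integral_sub hIA hIB]
        abel
      rw [hsub, norm_neg]
      have hd : (0:ℝ) ≤ dist X Y := dist_nonneg
      calc ‖∫ u in (0:ℝ)..s, (g (ext A u) - g (ext B u))‖
          ≤ ∫ u in (0:ℝ)..s, ‖g (ext A u) - g (ext B u)‖ :=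
            intervalIntegral.norm_integral_le_integral_norm hs0
        _ ≤ ∫ u in (0:ℝ)..s, dist X Y * (K ^ (m+1) / m.factorial) * u ^ m := by
            apply intervalIntegral.integral_mono_on hs0
            · exact Continuous.intervalIntegrable (by fun_prop) 0 s
            · exact (Continuous.intervalIntegrable (by fun_prop) 0 s)
            · intro u hu
              have huT : u ∈ Set.Icc (0: ℝ) T := ⟨hu.1, le_trans hu.2 hsT⟩
              have h1 : ‖g (ext A u) - g (ext B u)‖ ≤ K * ‖ext A u - ext B u‖ := hg _ _
              have h2 : ‖ext A u - ext B u‖ ≤ dist X Y * (K ^ m * u ^ m / m.factorial) := by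
                rw [hext_eq A u huT, hext_eq B u huT]
                exact ih X Y ⟨u, huT⟩
              calc ‖g (ext A u) - g (ext B u)‖ ≤ K * ‖ext A u - ext B u‖ := h1
                _ ≤ K * (dist X Y * (K ^ m * u ^ m / m.factorial)) := by
                    exact mul_le_mul_of_nonneg_left h2 hK
                _ = dist X Y * (K ^ (m+1) / m.factorial) * u ^ m := by ring
        _ = dist X Y * (K ^ (m+1) / m.factorial) * ∫ u in (0:ℝ)..s, u ^ m := by
            rw [← intervalIntegral.integral_const_mul]
        _ = dist X Y * (K ^ (m+1) * s ^ (m+1) / (m+1).factorial) := by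
            rw [integral_pow]
            simp only [Nat.factorial_succ, ne_eq, zero_pow, Nat.cast_mul]
            push_cast
            field_simp
            ring
  have dist_bound : ∀ (m : ℕ) (X Y : α),
      dist (Tm^[m] X) (Tm^[m] Y) ≤ (K * T) ^ m / m.factorial * dist X Y := by
    intro m X Y
    have hnn : (0:ℝ) ≤ (K*T)^m / m.factorial * dist X Y := by positivity
    rw [ContinuousMap.dist_le hnn]
    intro s
    rw [dist_eq_norm]
    have hsT : (s:ℝ)^m ≤ T^m := pow_le_pow_left₀ s.2.1 s.2.2 m
    calc ‖(Tm^[m] X) s - (Tm^[m] Y) s‖ ≤ dist X Y * (K ^ m * (s:ℝ) ^ m / m.factorial) :=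
          iter_bound m X Y s
      _ ≤ dist X Y * (K ^ m * T ^ m / m.factorial) := by gcongr
      _ = (K*T)^m / m.factorial * dist X Y := by rw [mul_pow]; ring
  obtain ⟨m, hm⟩ : ∃ m : ℕ, (K*T)^m / m.factorial < 1 := by
    have hlim := FloorSemiring.tendsto_pow_div_factorial_atTop (K*T)
    exact (hlim.eventually (gt_mem_nhds one_pos)).exists
  set c := (K*T)^m / (m.factorial : ℝ) with hc
  have hc0 : 0 ≤ c := by positivity
  have hcontr : ContractingWith c.toNNReal (Tm^[m]) := by
    constructor
    · rwa [← NNReal.coe_lt_one, Real.coe_toNNReal _ hc0]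
    · apply LipschitzWith.of_dist_le_mul
      intro X Y
      rw [Real.coe_toNNReal _ hc0]
      exact dist_bound m X Y
  have hfix : Function.IsFixedPt Tm (hcontr.fixedPoint (Tm^[m])) :=
    hcontr.isFixedPt_fixedPoint_iterate
  set W := hcontr.fixedPoint (Tm^[m]) with hW
  refine ⟨ext W, hext_cont W, ?_⟩
  intro s hs
  have h1 : ext W s = W ⟨s, hs⟩ := hext_eq W s hs
  rw [h1]
  conv_lhs => rw [← hfix]
  rfl

/-- Grönwall comparison for two solutions with possibly different initial conditions and a
perturbation `e` bounded by `ε`. -/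
lemma stmt13_sol_gron (K : ℝ) (hK : 0 ≤ K) (g : E → E)
    (hg : ∀ a b, ‖g a - g b‖ ≤ K * ‖a - b‖)
    (T : ℝ) (X Y : ℝ → E) (hXc : Continuous X) (hYc : Continuous Y)
    (x x' : E) (e : ℝ → E) (ε : ℝ) (hε : 0 ≤ ε)
    (he : ∀ s ∈ Set.Icc (0:ℝ) T, ‖e s‖ ≤ ε)
    (heq : ∀ s ∈ Set.Icc (0:ℝ) T,
      X s - Y s = (x - x') - (∫ u in (0:ℝ)..s, (g (X u) - g (Y u))) + e s) :
    ∀ s ∈ Set.Icc (0:ℝ) T, ‖X s - Y s‖ ≤ (‖x - x'‖ + ε) * Real.exp (K * s) := by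
  have hgc : Continuous g := stmt13_lip_cont K hK g hg
  have hq : Continuous (fun u => g (X u) - g (Y u)) := by fun_prop
  set G : ℝ → E := fun s => (x - x') - ∫ u in (0:ℝ)..s, (g (X u) - g (Y u)) with hG
  have hGc : Continuous G := by
    have hcp : Continuous (fun s : ℝ => ∫ u in (0:ℝ)..s, (g (X u) - g (Y u))) :=
      intervalIntegral.continuous_primitive (fun a b => hq.intervalIntegrable a b) 0
    fun_prop
  have hGd : ∀ s ∈ Set.Ico (0:ℝ) T,
      HasDerivWithinAt G (-(g (X s) - g (Y s))) (Set.Ici s) s := by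
    intro s _
    have hprim : HasDerivAt (fun u => ∫ v in (0:ℝ)..u, (g (X v) - g (Y v)))
        (g (X s) - g (Y s)) s :=
      intervalIntegral.integral_hasDerivAt_right (hq.intervalIntegrable 0 s)
        (hq.stronglyMeasurableAtFilter _ _) hq.continuousAt
    have := ((hasDerivAt_const s (x - x')).sub hprim).hasDerivWithinAt (s := Set.Ici s)
    rw [zero_sub] at this
    exact this
  have hG0 : ‖G 0‖ ≤ ‖x - x'‖ := by
    simp [hG, intervalIntegral.integral_same]
  have hbound : ∀ s ∈ Set.Ico (0:ℝ) T, ‖-(g (X s) - g (Y s))‖ ≤ K * ‖G s‖ + K * ε := by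
    intro s hs
    have hsIcc : s ∈ Set.Icc (0:ℝ) T := ⟨hs.1, hs.2.le⟩
    have h1 : ‖g (X s) - g (Y s)‖ ≤ K * ‖X s - Y s‖ := hg _ _
    have h2 : X s - Y s = G s + e s := heq s hsIcc
    have h3 : ‖X s - Y s‖ ≤ ‖G s‖ + ε := by
      rw [h2]
      exact (norm_add_le _ _).trans (by gcongr; exact he s hsIcc)
    rw [norm_neg]
    calc ‖g (X s) - g (Y s)‖ ≤ K * (‖G s‖ + ε) := h1.trans (by gcongr)
      _ = K * ‖G s‖ + K * ε := by ring
  have hmain := norm_le_gronwallBound_of_norm_deriv_right_le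
    (hGc.continuousOn) hGd hG0 hbound
  intro s hs
  have h2 : X s - Y s = G s + e s := heq s hs
  have h4 : ‖X s - Y s‖ ≤ gronwallBound ‖x - x'‖ K (K * ε) (s - 0) + ε := by
    rw [h2]
    exact (norm_add_le _ _).trans (add_le_add (hmain s hs) (he s hs))
  refine h4.trans ?_
  rw [sub_zero]
  rcases eq_or_ne K 0 with hK0 | hK0
  · subst hK0
    simp only [gronwallBound_K0, zero_mul, Real.exp_zero, mul_one, add_zero, mul_zero]
    simp
  · rw [gronwallBound_of_K_ne_0 hK0]
    have : K * ε / K = ε := by field_simp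
    rw [this]
    ring_nf
    nlinarith [Real.exp_pos (K * s)]

omit [CompleteSpace E] in
/-- Difference of two solutions (possibly different noises) satisfies the comparison identity. -/
lemma stmt13_sol_diff (g : E → E) (hgc : Continuous g) (T : ℝ)
    (X Y : ℝ → E) (hXc : Continuous X) (hYc : Continuous Y)
    (x x' : E) (h h' : ℝ → E)
    (hX : ∀ s ∈ Set.Icc (0:ℝ) T, X s = x - (∫ u in (0:ℝ)..s, g (X u)) + h s - h 0)
    (hY : ∀ s ∈ Set.Icc (0:ℝ) T, Y s = x' - (∫ u in (0:ℝ)..s, g (Y u)) + h' s - h' 0) :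
    ∀ s ∈ Set.Icc (0:ℝ) T,
      X s - Y s = (x - x') - (∫ u in (0:ℝ)..s, (g (X u) - g (Y u)))
        + ((h s - h 0) - (h' s - h' 0)) := by
  intro s hs
  have hIX : IntervalIntegrable (fun u => g (X u)) volume 0 s :=
    Continuous.intervalIntegrable (by fun_prop) 0 s
  have hIY : IntervalIntegrable (fun u => g (Y u)) volume 0 s :=
    Continuous.intervalIntegrable (by fun_prop) 0 s
  rw [hX s hs, hY s hs, intervalIntegral.integral_sub hIX hIY]
  abel

/-- Uniqueness of continuous solutions. -/
lemma stmt13_sol_unique (K : ℝ) (hK : 0 ≤ K) (g : E → E)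
    (hg : ∀ a b, ‖g a - g b‖ ≤ K * ‖a - b‖)
    (T : ℝ) (X Y : ℝ → E) (hXc : Continuous X) (hYc : Continuous Y)
    (x : E) (h : ℝ → E)
    (hX : ∀ s ∈ Set.Icc (0:ℝ) T, X s = x - (∫ u in (0:ℝ)..s, g (X u)) + h s - h 0)
    (hY : ∀ s ∈ Set.Icc (0:ℝ) T, Y s = x - (∫ u in (0:ℝ)..s, g (Y u)) + h s - h 0) :
    ∀ s ∈ Set.Icc (0:ℝ) T, X s = Y s := by
  have hgc : Continuous g := stmt13_lip_cont K hK g hg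
  have hd := stmt13_sol_diff g hgc T X Y hXc hYc x x h h hX hY
  have hd' : ∀ s ∈ Set.Icc (0:ℝ) T,
      X s - Y s = (x - x) - (∫ u in (0:ℝ)..s, (g (X u) - g (Y u)))
        + (fun _ : ℝ => (0:E)) s := by
    intro s hs
    simpa using hd s hs
  have hb := stmt13_sol_gron K hK g hg T X Y hXc hYc x x (fun _ => (0:E)) 0 le_rfl
    (fun s _ => by simp) hd'
  intro s hs
  have h2 := hb s hs
  simp only [sub_self, norm_zero, zero_add, add_zero, zero_mul] at h2
  have h5 : ‖X s - Y s‖ ≤ 0 := by simpa using h2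
  have h4 : ‖X s - Y s‖ = 0 := le_antisymm h5 (norm_nonneg _)
  have h3 : X s - Y s = 0 := by simpa using h4
  exact sub_eq_zero.mp h3

omit [NormedSpace ℝ E] [CompleteSpace E] in
/-- Continuous extension of a function continuous on `[0, T]`. -/
lemma stmt13_proj_ext (T : ℝ) (hT : 0 ≤ T) (X : ℝ → E) (hXc : ContinuousOn X (Set.Icc 0 T)) :
    ∃ X' : ℝ → E, Continuous X' ∧ ∀ s ∈ Set.Icc (0:ℝ) T, X' s = X s := by
  refine ⟨fun u => (Set.Icc (0:ℝ) T).restrict X (Set.projIcc 0 T hT u),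
    (hXc.restrict).comp continuous_projIcc, ?_⟩
  intro s hs
  simp [Set.projIcc_of_mem hT hs, Set.restrict_apply]
  rfl

/-- The solution equation transfers along equality on `[0, T]`. -/
lemma stmt13_sol_congr (g : E → E) (T : ℝ)
    (X X' : ℝ → E) (hXX' : ∀ s ∈ Set.Icc (0:ℝ) T, X' s = X s)
    (x : E) (h : ℝ → E)
    (hX : ∀ s ∈ Set.Icc (0:ℝ) T, X s = x - (∫ u in (0:ℝ)..s, g (X u)) + h s - h 0) :
    ∀ s ∈ Set.Icc (0:ℝ) T, X' s = x - (∫ u in (0:ℝ)..s, g (X' u)) + h s - h 0 := by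
  intro s hs
  have hint : (∫ u in (0:ℝ)..s, g (X' u)) = ∫ u in (0:ℝ)..s, g (X u) := by
    apply intervalIntegral.integral_congr
    intro u hu
    have : u ∈ Set.Icc (0:ℝ) T := by
      rw [Set.uIcc_of_le hs.1] at hu
      exact ⟨hu.1, hu.2.trans hs.2⟩
    simp [hXX' u this]
  rw [hXX' s hs, hint]
  exact hX s hs

omit [CompleteSpace E] in
/-- Time reversal of a solution. -/
lemma stmt13_sol_reverse (g : E → E) (hgc : Continuous g) (t : ℝ) (ht : 0 ≤ t)
    (X : ℝ → E) (hXc : Continuous X) (x : E) (h : ℝ → E)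
    (hX : ∀ s ∈ Set.Icc (0:ℝ) t, X s = x - (∫ u in (0:ℝ)..s, g (X u)) + h s - h 0) :
    ∀ s ∈ Set.Icc (0:ℝ) t, X (t - s)
      = X t - (∫ u in (0:ℝ)..s, -(g (X (t - u)))) + h (t - s) - h (t - 0) := by
  intro s hs
  have hts : t - s ∈ Set.Icc (0:ℝ) t := ⟨by linarith [hs.2], by linarith [hs.1]⟩
  have htt : t ∈ Set.Icc (0:ℝ) t := ⟨ht, le_rfl⟩
  have h1 := hX (t - s) hts
  have h2 := hX t htt
  have hcomp : (∫ u in (0:ℝ)..s, g (X (t - u))) = ∫ u in (t-s)..(t-0), g (X u) := by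
    simpa using intervalIntegral.integral_comp_sub_left (a := (0:ℝ)) (b := s)
      (fun u => g (X u)) t
  have hsplit : (∫ u in (0:ℝ)..(t-s), g (X u)) + (∫ u in (t-s)..t, g (X u))
      = ∫ u in (0:ℝ)..t, g (X u) :=
    intervalIntegral.integral_add_adjacent_intervals
      (Continuous.intervalIntegrable (by fun_prop) _ _)
      (Continuous.intervalIntegrable (by fun_prop) _ _)
  have hneg : (∫ u in (0:ℝ)..s, -(g (X (t - u)))) = -∫ u in (0:ℝ)..s, g (X (t - u)) :=
    intervalIntegral.integral_neg
  rw [h1, h2, hneg, hcomp]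
  rw [sub_zero] at *
  rw [← hsplit]
  abel

end FlowHelpers

/-- Proposition 4.6: the set-valued process of inverse images of a nonempty closed set
under the strong-solution flow `Φ` of `dX̂ = −β(X̂)ds + dω̂` has nonempty closed values,
each map `z ↦ Φ_t(z, ω(t−·))` is a bijection of `ℝⁿ`, and the process is continuous in
the Painlevé–Kuratowski sense (upper and lower semicontinuous). -/
theorem stmt13 (n : ℕ) (Kβ : ℝ) (hKβ : 0 ≤ Kβ)
    (β : EuclideanSpace ℝ (Fin n) → EuclideanSpace ℝ (Fin n))
    (hβ : ∀ x y, ‖β x - β y‖ ≤ Kβ * ‖x - y‖)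
    (Φ : ℝ → EuclideanSpace ℝ (Fin n) → (ℝ → EuclideanSpace ℝ (Fin n)) →
      EuclideanSpace ℝ (Fin n))
    (hΦ : ∀ t : ℝ, 0 ≤ t → ∀ (x : EuclideanSpace ℝ (Fin n))
        (ωh : ℝ → EuclideanSpace ℝ (Fin n)), Continuous ωh →
      ∃ Xh : ℝ → EuclideanSpace ℝ (Fin n), ContinuousOn Xh (Set.Icc 0 t) ∧
        (∀ s ∈ Set.Icc (0 : ℝ) t,
          Xh s = x - (∫ u in (0 : ℝ)..s, β (Xh u)) + ωh s - ωh 0) ∧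
        Φ t x ωh = Xh t)
    (ω : ℝ → EuclideanSpace ℝ (Fin n)) (hω : Continuous ω)
    (xstar : Set (EuclideanSpace ℝ (Fin n))) (hcl : IsClosed xstar)
    (hne : xstar.Nonempty) :
    (∀ t : ℝ, 0 ≤ t → Function.Bijective fun z => Φ t z (fun u => ω (t - u))) ∧
    (∀ t : ℝ, 0 ≤ t → ({z | Φ t z (fun u => ω (t - u)) ∈ xstar}.Nonempty ∧
      IsClosed {z | Φ t z (fun u => ω (t - u)) ∈ xstar})) ∧
    (∀ (tN : ℕ → ℝ) (t0 : ℝ) (zN : ℕ → EuclideanSpace ℝ (Fin n))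
        (z0 : EuclideanSpace ℝ (Fin n)),
      (∀ N, 0 ≤ tN N) → 0 ≤ t0 → Tendsto tN atTop (nhds t0) →
      (∀ N, Φ (tN N) (zN N) (fun u => ω (tN N - u)) ∈ xstar) →
      Tendsto zN atTop (nhds z0) →
      Φ t0 z0 (fun u => ω (t0 - u)) ∈ xstar) ∧
    (∀ (tN : ℕ → ℝ) (t0 : ℝ) (z0 : EuclideanSpace ℝ (Fin n)),
      (∀ N, 0 ≤ tN N) → 0 ≤ t0 → Tendsto tN atTop (nhds t0) →
      Φ t0 z0 (fun u => ω (t0 - u)) ∈ xstar →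
      ∃ zN : ℕ → EuclideanSpace ℝ (Fin n),
        (∀ N, Φ (tN N) (zN N) (fun u => ω (tN N - u)) ∈ xstar) ∧
        Tendsto zN atTop (nhds z0)) := by
  have hβc : Continuous β := stmt13_lip_cont Kβ hKβ β hβ
  have hωc : ∀ t : ℝ, Continuous (fun u => ω (t - u)) := fun t => hω.comp (continuous_const.sub continuous_id)
  -- the drift of the time-reversed equation
  set g' : EuclideanSpace ℝ (Fin n) → EuclideanSpace ℝ (Fin n) := fun a => -(β a) with hg'def
  have hg' : ∀ a b : EuclideanSpace ℝ (Fin n), ‖g' a - g' b‖ ≤ Kβ * ‖a - b‖ := by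
    intro a b
    simp only [hg'def]
    rw [show -(β a) - -(β b) = -(β a - β b) by abel, norm_neg]
    exact hβ a b
  have hg'c : Continuous g' := stmt13_lip_cont Kβ hKβ g' hg'
  -- the value of Φ agrees with the value of any continuous solution
  have phi_eq : ∀ t : ℝ, 0 ≤ t → ∀ (x : EuclideanSpace ℝ (Fin n)) (h : ℝ → EuclideanSpace ℝ (Fin n)), Continuous h →
      ∀ X : ℝ → EuclideanSpace ℝ (Fin n), Continuous X →
      (∀ s ∈ Set.Icc (0:ℝ) t, X s = x - (∫ u in (0:ℝ)..s, β (X u)) + h s - h 0) →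
      Φ t x h = X t := by
    intro t ht x h hh X hXc hX
    obtain ⟨Xh, hXhc, hXheq, hval⟩ := hΦ t ht x h hh
    obtain ⟨X', hX'c, hX'eq⟩ := stmt13_proj_ext t ht Xh hXhc
    have hX'sol := stmt13_sol_congr β t Xh X' hX'eq x h hXheq
    have huni := stmt13_sol_unique Kβ hKβ β hβ t X' X hX'c hXc x h hX'sol hX
    have htt : t ∈ Set.Icc (0:ℝ) t := ⟨ht, le_rfl⟩
    rw [hval, ← hX'eq t htt, huni t htt]
  -- upper Lipschitz bound
  have hA : ∀ t : ℝ, 0 ≤ t → ∀ x y : EuclideanSpace ℝ (Fin n),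
      ‖Φ t x (fun u => ω (t - u)) - Φ t y (fun u => ω (t - u))‖
        ≤ Real.exp (Kβ * t) * ‖x - y‖ := by
    intro t ht x y
    obtain ⟨X, hXc, hXeq⟩ := stmt13_sol_exists Kβ hKβ β hβ t ht (fun u => ω (t - u)) (hωc t) x
    obtain ⟨Y, hYc, hYeq⟩ := stmt13_sol_exists Kβ hKβ β hβ t ht (fun u => ω (t - u)) (hωc t) y
    have hFx : Φ t x (fun u => ω (t - u)) = X t := phi_eq t ht x _ (hωc t) X hXc hXeq
    have hFy : Φ t y (fun u => ω (t - u)) = Y t := phi_eq t ht y _ (hωc t) Y hYc hYeq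
    have hdiff := stmt13_sol_diff β hβc t X Y hXc hYc x y
      (fun u => ω (t - u)) (fun u => ω (t - u)) hXeq hYeq
    have hdiff' : ∀ s ∈ Set.Icc (0:ℝ) t,
        X s - Y s = (x - y) - (∫ u in (0:ℝ)..s, (β (X u) - β (Y u)))
          + (fun _ : ℝ => (0:EuclideanSpace ℝ (Fin n))) s := by
      intro s hs
      simpa using hdiff s hs
    have hgr := stmt13_sol_gron Kβ hKβ β hβ t X Y hXc hYc x y (fun _ => (0:EuclideanSpace ℝ (Fin n))) 0 le_rfl
      (fun s _ => by simp) hdiff' t ⟨ht, le_rfl⟩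
    rw [hFx, hFy]
    calc ‖X t - Y t‖ ≤ (‖x - y‖ + 0) * Real.exp (Kβ * t) := hgr
      _ = Real.exp (Kβ * t) * ‖x - y‖ := by ring
  -- lower Lipschitz bound (via time reversal)
  have hB : ∀ t : ℝ, 0 ≤ t → ∀ x y : EuclideanSpace ℝ (Fin n),
      ‖x - y‖ ≤ Real.exp (Kβ * t)
        * ‖Φ t x (fun u => ω (t - u)) - Φ t y (fun u => ω (t - u))‖ := by
    intro t ht x y
    obtain ⟨X, hXc, hXeq⟩ := stmt13_sol_exists Kβ hKβ β hβ t ht (fun u => ω (t - u)) (hωc t) x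
    obtain ⟨Y, hYc, hYeq⟩ := stmt13_sol_exists Kβ hKβ β hβ t ht (fun u => ω (t - u)) (hωc t) y
    have hFx : Φ t x (fun u => ω (t - u)) = X t := phi_eq t ht x _ (hωc t) X hXc hXeq
    have hFy : Φ t y (fun u => ω (t - u)) = Y t := phi_eq t ht y _ (hωc t) Y hYc hYeq
    -- reversed solutions
    have hXr : ∀ s ∈ Set.Icc (0:ℝ) t, (fun u => X (t - u)) s
        = X t - (∫ u in (0:ℝ)..s, g' ((fun v => X (t - v)) u))
          + (fun u => ω (t - (t - u))) s - (fun u => ω (t - (t - u))) 0 :=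
      stmt13_sol_reverse β hβc t ht X hXc x (fun u => ω (t - u)) hXeq
    have hYr : ∀ s ∈ Set.Icc (0:ℝ) t, (fun u => Y (t - u)) s
        = Y t - (∫ u in (0:ℝ)..s, g' ((fun v => Y (t - v)) u))
          + (fun u => ω (t - (t - u))) s - (fun u => ω (t - (t - u))) 0 :=
      stmt13_sol_reverse β hβc t ht Y hYc y (fun u => ω (t - u)) hYeq
    have hXrc : Continuous (fun u => X (t - u)) := hXc.comp (by fun_prop)
    have hYrc : Continuous (fun u => Y (t - u)) := hYc.comp (by fun_prop)
    have hdiff := stmt13_sol_diff g' hg'c t (fun u => X (t - u)) (fun u => Y (t - u))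
      hXrc hYrc (X t) (Y t) (fun u => ω (t - (t - u))) (fun u => ω (t - (t - u))) hXr hYr
    have hdiff' : ∀ s ∈ Set.Icc (0:ℝ) t,
        (fun u => X (t - u)) s - (fun u => Y (t - u)) s
          = (X t - Y t) - (∫ u in (0:ℝ)..s,
              (g' ((fun v => X (t - v)) u) - g' ((fun v => Y (t - v)) u)))
            + (fun _ : ℝ => (0:EuclideanSpace ℝ (Fin n))) s := by
      intro s hs
      simpa using hdiff s hs
    have hgr := stmt13_sol_gron Kβ hKβ g' hg' t (fun u => X (t - u)) (fun u => Y (t - u))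
      hXrc hYrc (X t) (Y t) (fun _ => (0:EuclideanSpace ℝ (Fin n))) 0 le_rfl (fun s _ => by simp) hdiff'
      t ⟨ht, le_rfl⟩
    have hX0 : X (t - t) = x := by
      rw [sub_self]
      have := hXeq 0 ⟨le_rfl, ht⟩
      simpa [intervalIntegral.integral_same] using this
    have hY0 : Y (t - t) = y := by
      rw [sub_self]
      have := hYeq 0 ⟨le_rfl, ht⟩
      simpa [intervalIntegral.integral_same] using this
    rw [hFx, hFy]
    calc ‖x - y‖ = ‖X (t - t) - Y (t - t)‖ := by rw [hX0, hY0]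
      _ ≤ (‖X t - Y t‖ + 0) * Real.exp (Kβ * t) := hgr
      _ = Real.exp (Kβ * t) * ‖X t - Y t‖ := by ring
  -- surjectivity
  have hC : ∀ t : ℝ, 0 ≤ t → ∀ y : EuclideanSpace ℝ (Fin n), ∃ z : EuclideanSpace ℝ (Fin n), Φ t z (fun u => ω (t - u)) = y := by
    intro t ht y
    obtain ⟨Q, hQc, hQeq⟩ := stmt13_sol_exists Kβ hKβ g' hg' t ht
      (fun u => ω (t - (t - u))) (hω.comp (continuous_const.sub (continuous_const.sub continuous_id))) y
    have hrev : ∀ s ∈ Set.Icc (0:ℝ) t, (fun u => Q (t - u)) s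
        = Q t - (∫ u in (0:ℝ)..s, β ((fun v => Q (t - v)) u))
          + (fun u => ω (t - u)) s - (fun u => ω (t - u)) 0 := by
      intro s hs
      have h0 := stmt13_sol_reverse g' hg'c t ht Q hQc y (fun u => ω (t - (t - u))) hQeq s hs
      simp only [hg'def, neg_neg, sub_sub_cancel] at h0
      simpa [sub_sub_cancel] using h0
    have hQrc : Continuous (fun u => Q (t - u)) := hQc.comp (by fun_prop)
    refine ⟨Q t, ?_⟩
    have hFz : Φ t (Q t) (fun u => ω (t - u)) = (fun u => Q (t - u)) t :=
      phi_eq t ht (Q t) _ (hωc t) (fun u => Q (t - u)) hQrc hrev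
    have hQ0 : Q 0 = y := by
      have := hQeq 0 ⟨le_rfl, ht⟩
      simpa [intervalIntegral.integral_same] using this
    rw [hFz]
    simpa [sub_self] using hQ0
  -- continuity in t for fixed z
  have hD : ∀ (z : EuclideanSpace ℝ (Fin n)) (tN : ℕ → ℝ) (t0 : ℝ), (∀ N, 0 ≤ tN N) → 0 ≤ t0 →
      Tendsto tN atTop (nhds t0) →
      Tendsto (fun N => Φ (tN N) z (fun u => ω (tN N - u))) atTop
        (nhds (Φ t0 z (fun u => ω (t0 - u)))) := by
    intro z tN t0 htN0 ht0 htN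
    set T := t0 + 1 with hTdef
    have hT0 : 0 ≤ T := by linarith
    obtain ⟨Y0, hY0c, hY0eq⟩ := stmt13_sol_exists Kβ hKβ β hβ T hT0
      (fun u => ω (t0 - u)) (hωc t0) z
    have hsolN : ∀ N, ∃ Y : ℝ → EuclideanSpace ℝ (Fin n), Continuous Y ∧
        ∀ s ∈ Set.Icc (0:ℝ) T, Y s = z - (∫ u in (0:ℝ)..s, β (Y u))
          + (fun u => ω (tN N - u)) s - (fun u => ω (tN N - u)) 0 :=
      fun N => stmt13_sol_exists Kβ hKβ β hβ T hT0 (fun u => ω (tN N - u)) (hωc (tN N)) z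
    choose Y hYc hYeq using hsolN
    have hev1 : ∀ᶠ N in atTop, tN N ∈ Set.Icc (0:ℝ) T := by
      have h1 : ∀ᶠ N in atTop, tN N < T := htN.eventually_lt_const (by linarith)
      filter_upwards [h1] with N h2
      exact ⟨htN0 N, h2.le⟩
    have hY0t : Tendsto (fun N => Y0 (tN N)) atTop (nhds (Y0 t0)) :=
      (hY0c.tendsto t0).comp htN
    have hdiff0 : Tendsto (fun N => Y N (tN N) - Y0 (tN N)) atTop (nhds 0) := by
      rw [Metric.tendsto_nhds]
      intro ε hε
      set η := ε / (2 * Real.exp (Kβ * T)) with hηdef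
      have hη0 : 0 < η := by positivity
      have huc : UniformContinuousOn ω (Set.Icc (-(T+1)) (T+1)) :=
        (isCompact_Icc).uniformContinuousOn_of_continuous hω.continuousOn
      obtain ⟨δ, hδ0, hδ⟩ := Metric.uniformContinuousOn_iff.mp huc (η/2) (by positivity)
      have hev2 : ∀ᶠ N in atTop, |tN N - t0| < δ := by
        have := htN (Metric.ball_mem_nhds t0 hδ0)
        filter_upwards [this] with N h2
        simpa [Real.dist_eq] using h2
      filter_upwards [hev1, hev2] with N h1 h2
      have hmem : ∀ s ∈ Set.Icc (0:ℝ) T, tN N - s ∈ Set.Icc (-(T+1)) (T+1) := by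
        intro s hs
        constructor
        · have := h1.2
          nlinarith [hs.2, htN0 N, hs.1]
        · nlinarith [hs.1, h1.2]
      have hmem0 : ∀ s ∈ Set.Icc (0:ℝ) T, t0 - s ∈ Set.Icc (-(T+1)) (T+1) := by
        intro s hs
        constructor
        · nlinarith [hs.2]
        · nlinarith [hs.1]
      have hnoise : ∀ s ∈ Set.Icc (0:ℝ) T,
          ‖((fun u => ω (tN N - u)) s - (fun u => ω (tN N - u)) 0)
            - ((fun u => ω (t0 - u)) s - (fun u => ω (t0 - u)) 0)‖ ≤ η := by
        intro s hs
        have hs0 : (0:ℝ) ∈ Set.Icc (0:ℝ) T := ⟨le_rfl, hT0⟩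
        have d1 : dist (ω (tN N - s)) (ω (t0 - s)) < η/2 := by
          apply hδ _ (hmem s hs) _ (hmem0 s hs)
          simpa [Real.dist_eq] using h2
        have d2 : dist (ω (tN N - 0)) (ω (t0 - 0)) < η/2 := by
          apply hδ _ (hmem 0 hs0) _ (hmem0 0 hs0)
          simpa [Real.dist_eq] using h2
        have heqn : (ω (tN N - s) - ω (tN N - 0)) - (ω (t0 - s) - ω (t0 - 0))
            = (ω (tN N - s) - ω (t0 - s)) - (ω (tN N - 0) - ω (t0 - 0)) := by abel
        calc ‖(ω (tN N - s) - ω (tN N - 0)) - (ω (t0 - s) - ω (t0 - 0))‖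
            = ‖(ω (tN N - s) - ω (t0 - s)) - (ω (tN N - 0) - ω (t0 - 0))‖ := by rw [heqn]
          _ ≤ ‖ω (tN N - s) - ω (t0 - s)‖ + ‖ω (tN N - 0) - ω (t0 - 0)‖ := norm_sub_le _ _
          _ ≤ η/2 + η/2 := by
              rw [dist_eq_norm] at d1 d2
              exact add_le_add d1.le d2.le
          _ = η := by ring
      have hdiffeq := stmt13_sol_diff β hβc T (Y N) Y0 (hYc N) hY0c z z
        (fun u => ω (tN N - u)) (fun u => ω (t0 - u)) (hYeq N) hY0eq
      have hgr := stmt13_sol_gron Kβ hKβ β hβ T (Y N) Y0 (hYc N) hY0c z z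
        (fun s => ((fun u => ω (tN N - u)) s - (fun u => ω (tN N - u)) 0)
          - ((fun u => ω (t0 - u)) s - (fun u => ω (t0 - u)) 0)) η hη0.le
        hnoise hdiffeq (tN N) h1
      have hexpT : Real.exp (Kβ * tN N) ≤ Real.exp (Kβ * T) := by
        apply Real.exp_le_exp.mpr
        exact mul_le_mul_of_nonneg_left h1.2 hKβ
      have hfinal : ‖Y N (tN N) - Y0 (tN N)‖ ≤ ε / 2 := by
        calc ‖Y N (tN N) - Y0 (tN N)‖ ≤ (‖z - z‖ + η) * Real.exp (Kβ * tN N) := hgr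
          _ = η * Real.exp (Kβ * tN N) := by simp
          _ ≤ η * Real.exp (Kβ * T) := by
              exact mul_le_mul_of_nonneg_left hexpT hη0.le
          _ = ε / 2 := by
              rw [hηdef]
              field_simp
      rw [dist_zero_right]
      linarith
    have hYt : Tendsto (fun N => Y N (tN N)) atTop (nhds (Y0 t0)) := by
      have h5 := hdiff0.add hY0t
      rw [zero_add] at h5
      refine h5.congr fun N => ?_
      abel
    have hevF : ∀ᶠ N in atTop,
        Φ (tN N) z (fun u => ω (tN N - u)) = Y N (tN N) := by
      filter_upwards [hev1] with N h1
      apply phi_eq (tN N) (htN0 N) z _ (hωc (tN N)) (Y N) (hYc N)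
      intro s hs
      exact hYeq N s ⟨hs.1, hs.2.trans h1.2⟩
    have hF0 : Φ t0 z (fun u => ω (t0 - u)) = Y0 t0 :=
      phi_eq t0 ht0 z _ (hωc t0) Y0 hY0c
        (fun s hs => hY0eq s ⟨hs.1, hs.2.trans (by linarith)⟩)
    rw [hF0]
    exact hYt.congr' (hevF.mono fun N h => h.symm)
  -- continuity in z for fixed t
  have hcontz : ∀ t : ℝ, 0 ≤ t → Continuous (fun z : EuclideanSpace ℝ (Fin n) => Φ t z (fun u => ω (t - u))) := by
    intro t ht
    have : LipschitzWith (Real.toNNReal (Real.exp (Kβ * t)))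
        (fun z : EuclideanSpace ℝ (Fin n) => Φ t z (fun u => ω (t - u))) := by
      apply LipschitzWith.of_dist_le_mul
      intro x y
      rw [Real.coe_toNNReal _ (Real.exp_pos _).le, dist_eq_norm, dist_eq_norm]
      exact hA t ht x y
    exact this.continuous
  refine ⟨?_, ?_, ?_, ?_⟩
  · -- bijectivity
    intro t ht
    constructor
    · intro x y hxy
      have hxy' : Φ t x (fun u => ω (t - u)) = Φ t y (fun u => ω (t - u)) := hxy
      have hb := hB t ht x y
      rw [hxy', sub_self, norm_zero, mul_zero] at hb
      have : x - y = 0 := by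
        have := le_antisymm hb (norm_nonneg _)
        simpa using this
      exact sub_eq_zero.mp this
    · intro y
      exact hC t ht y
  · -- nonempty and closed values
    intro t ht
    constructor
    · obtain ⟨w, hw⟩ := hne
      obtain ⟨z, hz⟩ := hC t ht w
      exact ⟨z, by simp only [Set.mem_setOf_eq, hz]; exact hw⟩
    · have : {z : EuclideanSpace ℝ (Fin n) | Φ t z (fun u => ω (t - u)) ∈ xstar}
          = (fun z : EuclideanSpace ℝ (Fin n) => Φ t z (fun u => ω (t - u))) ⁻¹' xstar := rfl
      rw [this]
      exact IsClosed.preimage (hcontz t ht) hcl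
  · -- upper semicontinuity
    intro tN t0 zN z0 htN0 ht0 htN hmem hz
    have h1 : Tendsto (fun N => Φ (tN N) (zN N) (fun u => ω (tN N - u))
        - Φ (tN N) z0 (fun u => ω (tN N - u))) atTop (nhds 0) := by
      apply squeeze_zero_norm (f := fun N => Φ (tN N) (zN N) (fun u => ω (tN N - u))
        - Φ (tN N) z0 (fun u => ω (tN N - u)))
        (a := fun N => Real.exp (Kβ * tN N) * ‖zN N - z0‖)
      · intro N
        exact hA (tN N) (htN0 N) (zN N) z0
      · have hexp : Tendsto (fun N => Real.exp (Kβ * tN N)) atTop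
            (nhds (Real.exp (Kβ * t0))) :=
          (Real.continuous_exp.tendsto _).comp (htN.const_mul Kβ)
        have hnrm : Tendsto (fun N => ‖zN N - z0‖) atTop (nhds 0) := by
          have := (tendsto_sub_nhds_zero_iff.mpr hz).norm
          simpa using this
        have := hexp.mul hnrm
        simpa using this
    have h2 : Tendsto (fun N => Φ (tN N) z0 (fun u => ω (tN N - u))
        - Φ t0 z0 (fun u => ω (t0 - u))) atTop (nhds 0) :=
      tendsto_sub_nhds_zero_iff.mpr (hD z0 tN t0 htN0 ht0 htN)
    have h3 : Tendsto (fun N => Φ (tN N) (zN N) (fun u => ω (tN N - u))) atTop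
        (nhds (Φ t0 z0 (fun u => ω (t0 - u)))) := by
      apply tendsto_sub_nhds_zero_iff.mp
      have h4 := h1.add h2
      rw [add_zero] at h4
      refine h4.congr fun N => ?_
      abel
    exact hcl.mem_of_tendsto h3 (Eventually.of_forall hmem)
  · -- lower semicontinuity
    intro tN t0 z0 htN0 ht0 htN hmem
    have hzN : ∀ N, ∃ z : EuclideanSpace ℝ (Fin n), Φ (tN N) z (fun u => ω (tN N - u))
        = Φ t0 z0 (fun u => ω (t0 - u)) :=
      fun N => hC (tN N) (htN0 N) _
    choose zN hzN using hzN
    refine ⟨zN, fun N => by rw [hzN N]; exact hmem, ?_⟩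
    apply tendsto_sub_nhds_zero_iff.mp
    apply squeeze_zero_norm (a := fun N => Real.exp (Kβ * tN N)
      * ‖Φ t0 z0 (fun u => ω (t0 - u)) - Φ (tN N) z0 (fun u => ω (tN N - u))‖)
    · intro N
      have := hB (tN N) (htN0 N) (zN N) z0
      rwa [hzN N] at this
    · have hexp : Tendsto (fun N => Real.exp (Kβ * tN N)) atTop
          (nhds (Real.exp (Kβ * t0))) :=
        (Real.continuous_exp.tendsto _).comp (htN.const_mul Kβ)
      have hnrm : Tendsto (fun N => ‖Φ t0 z0 (fun u => ω (t0 - u))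
          - Φ (tN N) z0 (fun u => ω (tN N - u))‖) atTop (nhds 0) := by
        have h5 : Tendsto (fun N => Φ t0 z0 (fun u => ω (t0 - u))
            - Φ (tN N) z0 (fun u => ω (tN N - u))) atTop (nhds 0) := by
          have h6 := (hD z0 tN t0 htN0 ht0 htN).const_sub (Φ t0 z0 (fun u => ω (t0 - u)))
          simpa using h6
        have := h5.norm
        simpa using this
      have := hexp.mul hnrm
      simpa using this
end

section
/- Let n ≥ 2, T > 0, K ≥ 1 and R > 0. For each N ∈ ℕ let g_N : [0,T] × ℝ^{n−1} → ℝ satisfy |g_N(t,a) − g_N(t,b)| ≤ K ‖a−b‖ for all t ∈ [0,T] and a,b ∈ ℝ^{n−1}. Assume: (i) there exists a uniformly bounded and equicontinuous sequence X_N : [0,T] → ℝⁿ with X_{1,N}(t) = g_N(t, X_{(−1),N}(t)) for all t and N; and (ii) there exists a nondecreasing function m : [0,T] → [0,∞) with m(δ) → 0 as δ → 0⁺ such that for every N, every t ∈ [0,T], and every a ∈ ℝ^{n−1} with ‖a‖ ≤ R, there is a continuous X : [t,T] → ℝⁿ with X(t) = (g_N(t,a), a), X₁(v) = g_N(v, X_{(−1)}(v))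 for all v ∈ [t,T], and ‖X(v) − X(u)‖ ≤ m(|v−u|) for all u,v ∈ [t,T]. Then for every sequence F_N : [0,T] → ℝ^{n−1} that is equicontinuous and uniformly bounded by R, the sequence of real functions t ↦ g_N(t, F_N(t)) is uniformly bounded and equicontinuous on [0,T]. -/
noncomputable section

/-- `ℝⁿ` (with Euclidean norm) split as the first coordinate times the remaining `m = n−1`
coordinates: `Hyp m = ℝ ×₂ ℝᵐ` with the `L²` (Euclidean) product norm. -/
abbrev Hyp (m : ℕ) := WithLp 2 (ℝ × EuclideanSpace ℝ (Fin m))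

/-- First coordinate `x₁` of `x ∈ ℝⁿ`. -/
def hypFst {m : ℕ} (x : Hyp m) : ℝ := (WithLp.equiv 2 (ℝ × EuclideanSpace ℝ (Fin m)) x).1

/-- Remaining coordinates `x_{(−1)}` of `x ∈ ℝⁿ`. -/
def hypSnd {m : ℕ} (x : Hyp m) : EuclideanSpace ℝ (Fin m) :=
  (WithLp.equiv 2 (ℝ × EuclideanSpace ℝ (Fin m)) x).2

/-- Assemble `x ∈ ℝⁿ` from `x₁` and `x_{(−1)}`. -/
def hypMk {m : ℕ} (a : ℝ) (b : EuclideanSpace ℝ (Fin m)) : Hyp m :=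
  (WithLp.equiv 2 (ℝ × EuclideanSpace ℝ (Fin m))).symm (a, b)

lemma hypFst_le {m : ℕ} (x : Hyp m) : |hypFst x| ≤ ‖x‖ := by
  have h := WithLp.prod_norm_sq_eq_of_L2 x
  have h1 : |hypFst x| ^ 2 ≤ ‖x‖ ^ 2 := by
    rw [h]
    have h2 : |hypFst x| = ‖x.fst‖ := rfl
    rw [h2]
    nlinarith [sq_nonneg ‖x.snd‖]
  exact (pow_le_pow_iff_left₀ (abs_nonneg _) (norm_nonneg _) two_ne_zero).1 h1

lemma hypSnd_le {m : ℕ} (x : Hyp m) : ‖hypSnd x‖ ≤ ‖x‖ := by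
  have h := WithLp.prod_norm_sq_eq_of_L2 x
  have h1 : ‖hypSnd x‖ ^ 2 ≤ ‖x‖ ^ 2 := by
    rw [h]
    have h2 : hypSnd x = x.snd := rfl
    rw [h2]
    nlinarith [sq_nonneg ‖x.fst‖]
  exact (pow_le_pow_iff_left₀ (norm_nonneg _) (norm_nonneg _) two_ne_zero).1 h1

lemma hypFst_sub {m : ℕ} (x y : Hyp m) : hypFst x - hypFst y = hypFst (x - y) := rfl
lemma hypSnd_sub {m : ℕ} (x y : Hyp m) : hypSnd x - hypSnd y = hypSnd (x - y) := rfl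
lemma hypFst_mk {m : ℕ} (a : ℝ) (b : EuclideanSpace ℝ (Fin m)) : hypFst (hypMk a b) = a := rfl
lemma hypSnd_mk {m : ℕ} (a : ℝ) (b : EuclideanSpace ℝ (Fin m)) : hypSnd (hypMk a b) = b := rfl

/-- Lemma 5.2: if the `K`-Lipschitz hypographical surfaces `g_N(t,·)` carry a uniformly
bounded equicontinuous sequence of paths, and paths on the surfaces with a common modulus
of continuity can be started at any point of the surface over the ball of radius `R`, then
`t ↦ g_N(t, F_N(t))` is uniformly bounded and equicontinuous for every equicontinuous
sequence `F_N` bounded by `R`. -/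
theorem stmt14 (m : ℕ) (hm : 1 ≤ m) (T : ℝ) (hT : 0 < T) (K : ℝ) (hK : 1 ≤ K)
    (R : ℝ) (hR : 0 < R)
    (g : ℕ → ℝ → EuclideanSpace ℝ (Fin m) → ℝ)
    (hLip : ∀ N, ∀ t ∈ Set.Icc (0 : ℝ) T, ∀ a b, |g N t a - g N t b| ≤ K * ‖a - b‖)
    (hi : ∃ X : ℕ → ℝ → Hyp m,
      (∃ C, ∀ N, ∀ t ∈ Set.Icc (0 : ℝ) T, ‖X N t‖ ≤ C) ∧
      (∀ ε > (0 : ℝ), ∃ δ > (0 : ℝ), ∀ N, ∀ s ∈ Set.Icc (0 : ℝ) T,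
        ∀ t ∈ Set.Icc (0 : ℝ) T, |s - t| ≤ δ → ‖X N s - X N t‖ ≤ ε) ∧
      (∀ N, ∀ t ∈ Set.Icc (0 : ℝ) T, hypFst (X N t) = g N t (hypSnd (X N t))))
    (hii : ∃ modu : ℝ → ℝ, (∀ δ, 0 ≤ modu δ) ∧ MonotoneOn modu (Set.Icc 0 T) ∧
      Filter.Tendsto modu (nhdsWithin 0 (Set.Ioi 0)) (nhds 0) ∧
      (∀ N, ∀ t ∈ Set.Icc (0 : ℝ) T, ∀ a : EuclideanSpace ℝ (Fin m), ‖a‖ ≤ R →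
        ∃ X : ℝ → Hyp m, ContinuousOn X (Set.Icc t T) ∧
          X t = hypMk (g N t a) a ∧
          (∀ v ∈ Set.Icc t T, hypFst (X v) = g N v (hypSnd (X v))) ∧
          (∀ u ∈ Set.Icc t T, ∀ v ∈ Set.Icc t T, ‖X v - X u‖ ≤ modu |v - u|))) :
    ∀ F : ℕ → ℝ → EuclideanSpace ℝ (Fin m),
      (∀ ε > (0 : ℝ), ∃ δ > (0 : ℝ), ∀ N, ∀ s ∈ Set.Icc (0 : ℝ) T,
        ∀ t ∈ Set.Icc (0 : ℝ) T, |s - t| ≤ δ → ‖F N s - F N t‖ ≤ ε) →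
      (∀ N, ∀ t ∈ Set.Icc (0 : ℝ) T, ‖F N t‖ ≤ R) →
      ((∃ C, ∀ N, ∀ t ∈ Set.Icc (0 : ℝ) T, |g N t (F N t)| ≤ C) ∧
       (∀ ε > (0 : ℝ), ∃ δ > (0 : ℝ), ∀ N, ∀ s ∈ Set.Icc (0 : ℝ) T,
         ∀ t ∈ Set.Icc (0 : ℝ) T, |s - t| ≤ δ →
           |g N s (F N s) - g N t (F N t)| ≤ ε)) := by
  intro F hFeq hFbd
  have hK0 : (0 : ℝ) < K := by linarith
  obtain ⟨X, ⟨C, hC⟩, hXeq, hXsurf⟩ := hi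
  obtain ⟨modu, hmodu0, hmono, htend, hpath⟩ := hii
  constructor
  · -- uniform boundedness
    refine ⟨K * (R + C) + C, fun N t ht => ?_⟩
    have hs := hXsurf N t ht
    have hb := hC N t ht
    have h1 : |g N t (hypSnd (X N t))| ≤ C := by rw [← hs]; exact (hypFst_le _).trans hb
    have h2 : ‖hypSnd (X N t)‖ ≤ C := (hypSnd_le _).trans hb
    have h3 : ‖F N t - hypSnd (X N t)‖ ≤ R + C :=
      (norm_sub_le _ _).trans (add_le_add (hFbd N t ht) h2)
    calc |g N t (F N t)|
        ≤ |g N t (F N t) - g N t (hypSnd (X N t))| + |g N t (hypSnd (X N t))| := by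
          have := abs_add_le (g N t (F N t) - g N t (hypSnd (X N t))) (g N t (hypSnd (X N t)))
          simpa using this
      _ ≤ K * ‖F N t - hypSnd (X N t)‖ + C :=
          add_le_add (hLip N t ht _ _) h1
      _ ≤ K * (R + C) + C := by nlinarith
  · -- equicontinuity
    -- key estimate: for t ≤ s, variation of the surface at a fixed point a
    have key : ∀ N, ∀ t ∈ Set.Icc (0:ℝ) T, ∀ s ∈ Set.Icc (0:ℝ) T, t ≤ s →
        ∀ a : EuclideanSpace ℝ (Fin m), ‖a‖ ≤ R →
        |g N s a - g N t a| ≤ (K + 1) * modu |s - t| := by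
      intro N t ht s hs hts a ha
      obtain ⟨Y, _, hYt, hYsurf, hYmod⟩ := hpath N t ht a ha
      have htmem : t ∈ Set.Icc t T := ⟨le_refl t, ht.2⟩
      have hsmem : s ∈ Set.Icc t T := ⟨hts, hs.2⟩
      have hYta : hypSnd (Y t) = a := by rw [hYt]; exact hypSnd_mk _ _
      have hYtg : hypFst (Y t) = g N t a := by rw [hYt]; exact hypFst_mk _ _
      have hmod1 : ‖Y s - Y t‖ ≤ modu |s - t| := hYmod t htmem s hsmem
      have hmod2 : ‖Y t - Y s‖ ≤ modu |s - t| := by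
        rw [← abs_sub_comm]; exact hYmod s hsmem t htmem
      have step1 : |g N s a - g N s (hypSnd (Y s))| ≤ K * modu |s - t| := by
        calc |g N s a - g N s (hypSnd (Y s))| ≤ K * ‖a - hypSnd (Y s)‖ := hLip N s hs _ _
          _ = K * ‖hypSnd (Y t - Y s)‖ := by rw [← hYta, hypSnd_sub]
          _ ≤ K * ‖Y t - Y s‖ := by
              have := hypSnd_le (Y t - Y s); nlinarith
          _ ≤ K * modu |s - t| := by nlinarith
      have step2 : |g N s (hypSnd (Y s)) - g N t a| ≤ modu |s - t| := by
        rw [← hYsurf s hsmem, ← hYtg, hypFst_sub]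
        exact (hypFst_le _).trans hmod1
      calc |g N s a - g N t a|
          ≤ |g N s a - g N s (hypSnd (Y s))| + |g N s (hypSnd (Y s)) - g N t a| :=
            abs_sub_le _ _ _
        _ ≤ K * modu |s - t| + modu |s - t| := add_le_add step1 step2
        _ = (K + 1) * modu |s - t| := by ring
    intro ε hε
    obtain ⟨δ1, hδ1, hF1⟩ := hFeq (ε / (2 * K)) (by positivity)
    have htend' := Metric.tendsto_nhdsWithin_nhds.1 htend (ε / (2 * (K + 1))) (by positivity)
    obtain ⟨δ2, hδ2, h2⟩ := htend'
    refine ⟨min δ1 (δ2 / 2), by positivity, ?_⟩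
    intro N s hs t ht hst
    by_cases hst0 : s = t
    · simp [hst0, hε.le]
    -- modu bound
    have habs : 0 < |s - t| := abs_pos.2 (sub_ne_zero.2 hst0)
    have habs2 : |s - t| < δ2 := by
      have h3 : |s - t| ≤ δ2 / 2 := hst.trans (min_le_right _ _)
      linarith
    have hmodub : modu |s - t| < ε / (2 * (K + 1)) := by
      have := h2 (Set.mem_Ioi.2 habs) (by simpa [Real.dist_eq, abs_of_pos habs] using habs2)
      rw [Real.dist_eq] at this
      calc modu |s - t| ≤ |modu |s - t| - 0| := by
            rw [sub_zero]; exact le_abs_self _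
        _ < ε / (2 * (K + 1)) := this
    have hsurfterm : |g N s (F N t) - g N t (F N t)| ≤ (K + 1) * modu |s - t| := by
      rcases le_total t s with h | h
      · exact key N t ht s hs h (F N t) (hFbd N t ht)
      · rw [abs_sub_comm, abs_sub_comm s t]
        exact key N s hs t ht h (F N t) (hFbd N t ht)
    have hFterm : ‖F N s - F N t‖ ≤ ε / (2 * K) :=
      hF1 N s hs t ht (hst.trans (min_le_left _ _))
    calc |g N s (F N s) - g N t (F N t)|
        ≤ |g N s (F N s) - g N s (F N t)| + |g N s (F N t) - g N t (F N t)| :=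
          abs_sub_le _ _ _
      _ ≤ K * ‖F N s - F N t‖ + (K + 1) * modu |s - t| :=
          add_le_add (hLip N s hs _ _) hsurfterm
      _ ≤ K * (ε / (2 * K)) + (K + 1) * (ε / (2 * (K + 1))) := by
          have h4 := hmodu0 |s - t|
          nlinarith
      _ = ε := by field_simp; ring

end
end

section
/- Let β : ℝⁿ → ℝⁿ be Lipschitz with constant K_β, let K ≥ 1, and let g : ℝ^{n−1} → ℝ satisfy |g(a) − g(b)| ≤ K ‖a−b‖ for all a,b. Let t_{j−1} < t_j < ⋯ < t_k be reals, let a ∈ ℝ^{n−1}, w ∈ ℝ^{n−1}, and let Y(t_i), X(t_i) ∈ ℝⁿ for i = j−1, …, k satisfy Y_{(−1)}(t_k) = a + Σ_{i=j}^{k} β_{(−1)}(Y(t_i)) (t_i − t_{i−1}) + w and X_{(−1)}(t_k) = a + Σ_{i=j}^{k} β_{(−1)}(X(t_i)) (t_i − t_{i−1}) + w, and suppose Y₁(t_k) = g(Y_{(−1)}(t_k)). Then |Y₁(t_k) − g(X_{(−1)}(t_k))| ≤ K · K_β · ( max_{j≤i≤k} ‖Y(t_i)‖ + max_{j≤i≤k}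 ‖X(t_i)‖ ) (t_k − t_{j−1}). -/
noncomputable section

lemma hypSnd_norm_le {m : ℕ} (u : Hyp m) : ‖hypSnd u‖ ≤ ‖u‖ := by
  have h := WithLp.prod_norm_sq_eq_of_L2 u
  have h2 : ‖hypSnd u‖^2 ≤ ‖u‖^2 := by
    rw [h, show hypSnd u = u.snd from rfl]; nlinarith [sq_nonneg ‖u.fst‖]
  calc ‖hypSnd u‖ = Real.sqrt (‖hypSnd u‖^2) := (Real.sqrt_sq (norm_nonneg _)).symm
    _ ≤ Real.sqrt (‖u‖^2) := Real.sqrt_le_sqrt h2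
    _ = ‖u‖ := Real.sqrt_sq (norm_nonneg _)

lemma tau_telescope (M : ℕ) (τ : Fin (M+1) → ℝ) :
    ∑ i : Fin M, (τ i.succ - τ i.castSucc) = τ (Fin.last M) - τ 0 := by
  have key : ∀ i : Fin M, τ i.succ - τ i.castSucc
      = (fun j : ℕ => τ ⟨min (j+1) M, by omega⟩ - τ ⟨min j M, by omega⟩) (i : ℕ) := by
    intro i
    congr 2 <;> exact Fin.ext (by simp [Nat.min_eq_left, Nat.succ_le_of_lt i.isLt, Nat.le_of_lt i.isLt])
  rw [Finset.sum_congr rfl (fun i _ => key i),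
    Fin.sum_univ_eq_sum_range (fun j : ℕ => τ ⟨min (j+1) M, by omega⟩ - τ ⟨min j M, by omega⟩) M,
    Finset.sum_range_sub (fun j => τ ⟨min j M, by omega⟩)]
  congr 1 <;> exact congrArg τ (Fin.ext (by simp))

/-- Lemma 'u.approx' of Section 7: if the implicit-Euler predictor `Y` on the `K`-Lipschitz
surface `g` and the implicit Euler approximation `X` are driven over the times
`τ₀ < τ₁ < ⋯ < τ_M` (representing `t_{j−1} < t_j < ⋯ < t_k`) by increments whose last
`n−1` coordinates coincide, then the predicted surface height satisfies
`|Y₁(τ_M) − g(X_{(−1)}(τ_M))| ≤ K K_β (max ‖Y‖ + max ‖X‖)(τ_M − τ₀)`. -/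
theorem stmt17 (m : ℕ) (Kβ : ℝ) (hKβ : 0 ≤ Kβ)
    (β : Hyp m → Hyp m) (hβ : ∀ x y, ‖β x - β y‖ ≤ Kβ * ‖x - y‖)
    (K : ℝ) (hK : 1 ≤ K)
    (g : EuclideanSpace ℝ (Fin m) → ℝ) (hg : ∀ a b, |g a - g b| ≤ K * ‖a - b‖)
    (M : ℕ) (hM : 0 < M) (τ : Fin (M + 1) → ℝ) (hτ : StrictMono τ)
    (a w : EuclideanSpace ℝ (Fin m)) (Y X : Fin (M + 1) → Hyp m)
    (hYe : hypSnd (Y (Fin.last M))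
      = a + (∑ i : Fin M, (τ i.succ - τ i.castSucc) • hypSnd (β (Y i.succ))) + w)
    (hXe : hypSnd (X (Fin.last M))
      = a + (∑ i : Fin M, (τ i.succ - τ i.castSucc) • hypSnd (β (X i.succ))) + w)
    (hY1 : hypFst (Y (Fin.last M)) = g (hypSnd (Y (Fin.last M)))) :
    |hypFst (Y (Fin.last M)) - g (hypSnd (X (Fin.last M)))|
      ≤ K * Kβ * ((⨆ i : Fin M, ‖Y i.succ‖) + ⨆ i : Fin M, ‖X i.succ‖)
        * (τ (Fin.last M) - τ 0) := by
  haveI : Nonempty (Fin M) := ⟨⟨0, hM⟩⟩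
  set SY := ⨆ i : Fin M, ‖Y i.succ‖ with hSY
  set SX := ⨆ i : Fin M, ‖X i.succ‖ with hSX
  have hSYle : ∀ i : Fin M, ‖Y i.succ‖ ≤ SY := fun i =>
    le_ciSup (Set.Finite.bddAbove (Set.finite_range fun j : Fin M => ‖Y j.succ‖)) i
  have hSXle : ∀ i : Fin M, ‖X i.succ‖ ≤ SX := fun i =>
    le_ciSup (Set.Finite.bddAbove (Set.finite_range fun j : Fin M => ‖X j.succ‖)) i
  have hSnn : 0 ≤ SY + SX := by
    have := hSYle ⟨0, hM⟩; have := hSXle ⟨0, hM⟩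
    have := norm_nonneg (Y (⟨0, hM⟩ : Fin M).succ)
    have := norm_nonneg (X (⟨0, hM⟩ : Fin M).succ); linarith
  have hdiff : hypSnd (Y (Fin.last M)) - hypSnd (X (Fin.last M))
      = ∑ i : Fin M, (τ i.succ - τ i.castSucc) •
          (hypSnd (β (Y i.succ)) - hypSnd (β (X i.succ))) := by
    rw [hYe, hXe]
    simp only [smul_sub, Finset.sum_sub_distrib]
    abel
  have hterm : ∀ i : Fin M,
      ‖(τ i.succ - τ i.castSucc) • (hypSnd (β (Y i.succ)) - hypSnd (β (X i.succ)))‖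
        ≤ (τ i.succ - τ i.castSucc) * (Kβ * (SY + SX)) := by
    intro i
    have hΔ : 0 ≤ τ i.succ - τ i.castSucc := le_of_lt (by
      have : (i.castSucc : Fin (M+1)) < i.succ := Fin.castSucc_lt_succ
      linarith [hτ this])
    rw [norm_smul, Real.norm_eq_abs, abs_of_nonneg hΔ]
    apply mul_le_mul_of_nonneg_left _ hΔ
    calc ‖hypSnd (β (Y i.succ)) - hypSnd (β (X i.succ))‖
        = ‖hypSnd (β (Y i.succ) - β (X i.succ))‖ := rfl
      _ ≤ ‖β (Y i.succ) - β (X i.succ)‖ := hypSnd_norm_le _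
      _ ≤ Kβ * ‖Y i.succ - X i.succ‖ := hβ _ _
      _ ≤ Kβ * (SY + SX) := by
          apply mul_le_mul_of_nonneg_left _ hKβ
          calc ‖Y i.succ - X i.succ‖ ≤ ‖Y i.succ‖ + ‖X i.succ‖ := norm_sub_le _ _
            _ ≤ SY + SX := add_le_add (hSYle i) (hSXle i)
  have hnormsum : ‖hypSnd (Y (Fin.last M)) - hypSnd (X (Fin.last M))‖
      ≤ (τ (Fin.last M) - τ 0) * (Kβ * (SY + SX)) := by
    rw [hdiff]
    calc ‖∑ i : Fin M, (τ i.succ - τ i.castSucc) •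
            (hypSnd (β (Y i.succ)) - hypSnd (β (X i.succ)))‖
        ≤ ∑ i : Fin M, ‖(τ i.succ - τ i.castSucc) •
            (hypSnd (β (Y i.succ)) - hypSnd (β (X i.succ)))‖ := norm_sum_le _ _
      _ ≤ ∑ i : Fin M, (τ i.succ - τ i.castSucc) * (Kβ * (SY + SX)) :=
          Finset.sum_le_sum (fun i _ => hterm i)
      _ = (∑ i : Fin M, (τ i.succ - τ i.castSucc)) * (Kβ * (SY + SX)) :=
          (Finset.sum_mul _ _ _).symm
      _ = (τ (Fin.last M) - τ 0) * (Kβ * (SY + SX)) := by rw [tau_telescope]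
  rw [hY1]
  calc |g (hypSnd (Y (Fin.last M))) - g (hypSnd (X (Fin.last M)))|
      ≤ K * ‖hypSnd (Y (Fin.last M)) - hypSnd (X (Fin.last M))‖ := hg _ _
    _ ≤ K * ((τ (Fin.last M) - τ 0) * (Kβ * (SY + SX))) :=
        mul_le_mul_of_nonneg_left hnormsum (by linarith)
    _ = K * Kβ * (SY + SX) * (τ (Fin.last M) - τ 0) := by ring


end
end

section
/- Let μ ∈ ℝ, ν(x) = e^{−2μx}, and for z < y set h(z,y) = ∫_z^y ν(x) dx. For f : ℝ → ℝ twice continuously differentiable define (Λ f)(z,y) = (1/h(z,y)) ∫_z^y ν(x) f(x) dx and (𝒜 f)(x) = −μ f'(x) + (1/2) f''(x). Then for all z < y: (Λ(𝒜 f))(z,y) = μ ( ∂_y(Λf) + ∂_z(Λf) )(z,y) + (1/2) ( ∂²_y(Λf) − 2 ∂_y∂_z(Λf) + ∂²_z(Λf) )(z,y) + ( (ν(y) + ν(z)) / h(z,y) ) · ( ∂_y(Λf) − ∂_z(Λf) )(z,y). -/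
open MeasureTheory intervalIntegral

/-- The intertwining identity `Λ𝒜f = ℬ*Λf` of Section 1.2 for the one-dimensional
Brownian motion with constant drift `−μ`: with `ν(x) = e^{−2μx}`, `h(z,y) = ∫_z^y ν`,
`(Λf)(z,y) = h(z,y)⁻¹ ∫_z^y ν f`, and `𝒜f = −μ f' + ½ f''`, one has
`Λ(𝒜f) = μ(∂_y + ∂_z)(Λf) + ½(∂_y − ∂_z)²(Λf) + ((ν(y)+ν(z))/h)(∂_y − ∂_z)(Λf)`. -/
theorem stmt18 (μ : ℝ) (f : ℝ → ℝ) (hf : ContDiff ℝ 2 f) (z y : ℝ) (hzy : z < y)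
    (ν : ℝ → ℝ) (hν : ∀ x, ν x = Real.exp (-(2 * μ * x)))
    (h : ℝ → ℝ → ℝ) (hh : ∀ z' y', h z' y' = ∫ x in z'..y', ν x)
    (F : ℝ → ℝ → ℝ)
    (hF : ∀ z' y', F z' y' = (h z' y')⁻¹ * ∫ x in z'..y', ν x * f x) :
    (h z y)⁻¹ *
        (∫ x in z..y, ν x * (-μ * deriv f x + (1 / 2) * deriv (deriv f) x))
      = μ * (deriv (fun y' => F z y') y + deriv (fun z' => F z' y) z)
        + (1 / 2) *
          (deriv (fun y' => deriv (fun y'' => F z y'') y') y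
            - 2 * deriv (fun y' => deriv (fun z' => F z' y') z) y
            + deriv (fun z' => deriv (fun z'' => F z'' y) z') z)
        + ((ν y + ν z) / h z y) *
          (deriv (fun y' => F z y') y - deriv (fun z' => F z' y) z) := by
  -- basic facts about ν
  have νeq : ν = fun t => Real.exp (-(2 * μ * t)) := funext hν
  have νpos : ∀ x, 0 < ν x := fun x => by rw [hν]; exact Real.exp_pos _
  have νcont : Continuous ν := by rw [νeq]; fun_prop
  have νderiv : ∀ x, HasDerivAt ν (-(2 * μ) * ν x) x := by
    intro x
    have h1 : HasDerivAt (fun t : ℝ => -(2 * μ * t)) (-(2*μ)) x := by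
      simpa [Pi.neg_def] using ((hasDerivAt_id x).const_mul (2*μ)).neg
    rw [νeq]
    simpa [mul_comm] using h1.exp
  -- facts about f
  have hf1 : ContDiff ℝ 1 (deriv f) := by
    simpa using hf.iterate_deriv' 1 1
  have fdiff : Differentiable ℝ f := hf.differentiable (by norm_num)
  have f'diff : Differentiable ℝ (deriv f) := hf1.differentiable one_ne_zero
  have f'cont : Continuous (deriv f) := f'diff.continuous
  have f''cont : Continuous (deriv (deriv f)) := (contDiff_one_iff_deriv.mp hf1).2
  have fcont : Continuous f := fdiff.continuous
  -- integrability
  have gcont : Continuous (fun x => ν x * f x) := νcont.mul fcont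
  have hint : ∀ (a b : ℝ), IntervalIntegrable ν volume a b :=
    fun a b => νcont.intervalIntegrable a b
  have gint : ∀ (a b : ℝ), IntervalIntegrable (fun x => ν x * f x) volume a b :=
    fun a b => gcont.intervalIntegrable a b
  -- derivatives of h and G
  have hd_right : ∀ (z' t : ℝ), HasDerivAt (fun s => h z' s) (ν t) t := by
    intro z' t
    have : HasDerivAt (fun s => ∫ x in z'..s, ν x) (ν t) t :=
      integral_hasDerivAt_right (hint z' t)
        (νcont.stronglyMeasurableAtFilter _ _) νcont.continuousAt
    exact this.congr_of_eventuallyEq (by filter_upwards with s using (hh z' s))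
  have hd_left : ∀ (y' t : ℝ), HasDerivAt (fun s => h s y') (-(ν t)) t := by
    intro y' t
    have : HasDerivAt (fun s => ∫ x in s..y', ν x) (-(ν t)) t :=
      integral_hasDerivAt_left (hint t y')
        (νcont.stronglyMeasurableAtFilter _ _) νcont.continuousAt
    exact this.congr_of_eventuallyEq (by filter_upwards with s using (hh s y'))
  have Gd_right : ∀ (z' t : ℝ),
      HasDerivAt (fun s => ∫ x in z'..s, ν x * f x) (ν t * f t) t :=
    fun z' t => integral_hasDerivAt_right (gint z' t)
      (gcont.stronglyMeasurableAtFilter _ _) gcont.continuousAt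
  have Gd_left : ∀ (y' t : ℝ),
      HasDerivAt (fun s => ∫ x in s..y', ν x * f x) (-(ν t * f t)) t :=
    fun y' t => integral_hasDerivAt_left (gint t y')
      (gcont.stronglyMeasurableAtFilter _ _) gcont.continuousAt
  -- positivity of h
  have hpos : ∀ z' y', z' < y' → 0 < h z' y' := by
    intro z' y' hlt
    rw [hh]
    exact intervalIntegral_pos_of_pos (hint z' y') νpos hlt
  -- first derivative in y
  have dFy : ∀ z' y', z' < y' →
      HasDerivAt (fun t => F z' t) (ν y' * (f y' - F z' y') / h z' y') y' := by
    intro z' y' hlt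
    have hne : h z' y' ≠ 0 := (hpos z' y' hlt).ne'
    have hinv : HasDerivAt (fun t => (h z' t)⁻¹) (-(ν y') / (h z' y') ^ 2) y' :=
      (hd_right z' y').inv hne
    have hmul := hinv.mul (Gd_right z' y')
    have : HasDerivAt (fun t => F z' t)
        (-(ν y') / (h z' y') ^ 2 * (∫ x in z'..y', ν x * f x)
          + (h z' y')⁻¹ * (ν y' * f y')) y' := by
      refine hmul.congr_of_eventuallyEq ?_
      filter_upwards with s using (hF z' s)
    convert this using 1
    rw [hF]
    field_simp
    ring
  -- first derivative in z
  have dFz : ∀ z' y', z' < y' →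
      HasDerivAt (fun t => F t y') (ν z' * (F z' y' - f z') / h z' y') z' := by
    intro z' y' hlt
    have hne : h z' y' ≠ 0 := (hpos z' y' hlt).ne'
    have hinv : HasDerivAt (fun t => (h t y')⁻¹) (-(-(ν z')) / (h z' y') ^ 2) z' :=
      (hd_left y' z').inv hne
    have hmul := hinv.mul (Gd_left y' z')
    have : HasDerivAt (fun t => F t y')
        (-(-(ν z')) / (h z' y') ^ 2 * (∫ x in z'..y', ν x * f x)
          + (h z' y')⁻¹ * -(ν z' * f z')) z' := by
      refine hmul.congr_of_eventuallyEq ?_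
      filter_upwards with s using (hF s y')
    convert this using 1
    rw [hF]
    field_simp
    ring
  -- abbreviations
  set a := ν y with ha
  set b := ν z with hb
  set H := h z y with hH
  have Hne : H ≠ 0 := (hpos z y hzy).ne'
  set Fv := F z y with hFv
  set A' := deriv f y with hA'
  set B' := deriv f z with hB'
  set P := a * (f y - Fv) / H with hP
  set Q := b * (Fv - f z) / H with hQ
  -- the four deriv values
  have d1 : deriv (fun y' => F z y') y = P := (dFy z y hzy).deriv
  have d2 : deriv (fun z' => F z' y) z = Q := (dFz z y hzy).deriv
  -- second derivative in y
  have dyy : deriv (fun y' => deriv (fun y'' => F z y'') y') y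
      = ((-(2*μ) * a * (f y - Fv) + a * (A' - P)) * H - a * (f y - Fv) * a) / H ^ 2 := by
    have heq : (fun y' => deriv (fun y'' => F z y'') y')
        =ᶠ[nhds y] fun y' => ν y' * (f y' - F z y') / h z y' := by
      filter_upwards [eventually_gt_nhds hzy] with y' hy'
      exact (dFy z y' hy').deriv
    rw [heq.deriv_eq]
    have hnum : HasDerivAt (fun y' => ν y' * (f y' - F z y'))
        (-(2*μ) * a * (f y - Fv) + a * (A' - P)) y := by
      have hF' : HasDerivAt (fun y' => F z y') P y := dFy z y hzy
      have hf' : HasDerivAt f A' y := fdiff.differentiableAt.hasDerivAt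
      exact (νderiv y).mul (hf'.sub hF')
    exact ((hnum.div (hd_right z y) Hne)).deriv
  -- mixed derivative
  have dyz : deriv (fun y' => deriv (fun z' => F z' y') z) y
      = (b * P * H - b * (Fv - f z) * a) / H ^ 2 := by
    have heq : (fun y' => deriv (fun z' => F z' y') z)
        =ᶠ[nhds y] fun y' => ν z * (F z y' - f z) / h z y' := by
      filter_upwards [eventually_gt_nhds hzy] with y' hy'
      exact (dFz z y' hy').deriv
    rw [heq.deriv_eq]
    have hnum : HasDerivAt (fun y' => ν z * (F z y' - f z)) (b * P) y := by
      have hF' : HasDerivAt (fun y' => F z y') P y := dFy z y hzy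
      simpa using (hF'.sub_const (f z)).const_mul (ν z)
    exact (hnum.div (hd_right z y) Hne).deriv
  -- second derivative in z
  have dzz : deriv (fun z' => deriv (fun z'' => F z'' y) z') z
      = ((-(2*μ) * b * (Fv - f z) + b * (Q - B')) * H - b * (Fv - f z) * (-b)) / H ^ 2 := by
    have heq : (fun z' => deriv (fun z'' => F z'' y) z')
        =ᶠ[nhds z] fun z' => ν z' * (F z' y - f z') / h z' y := by
      filter_upwards [eventually_lt_nhds hzy] with z' hz'
      exact (dFz z' y hz').deriv
    rw [heq.deriv_eq]
    have hnum : HasDerivAt (fun z' => ν z' * (F z' y - f z'))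
        (-(2*μ) * b * (Fv - f z) + b * (Q - B')) z := by
      have hF' : HasDerivAt (fun z' => F z' y) Q z := dFz z y hzy
      have hf' : HasDerivAt f B' z := fdiff.differentiableAt.hasDerivAt
      exact (νderiv z).mul (hF'.sub hf')
    exact (hnum.div (hd_left y z) Hne).deriv
  -- the left-hand side via FTC
  have LHS : (∫ x in z..y, ν x * (-μ * deriv f x + (1 / 2) * deriv (deriv f) x))
      = (1/2) * a * A' - (1/2) * b * B' := by
    have hderiv : ∀ x ∈ Set.uIcc z y, HasDerivAt (fun t => (1/2) * ν t * deriv f t)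
        (ν x * (-μ * deriv f x + (1 / 2) * deriv (deriv f) x)) x := by
      intro x _
      have h1 : HasDerivAt (fun t => ν t * deriv f t)
          (-(2*μ) * ν x * deriv f x + ν x * deriv (deriv f) x) x :=
        (νderiv x).mul (f'diff.differentiableAt.hasDerivAt)
      have h2 : HasDerivAt (fun t => (1/2) * ν t * deriv f t)
          ((1/2) * (-(2*μ) * ν x * deriv f x + ν x * deriv (deriv f) x)) x := by
        simpa [mul_assoc] using h1.const_mul (1/2 : ℝ)
      convert h2 using 1
      try ring
    have hint2 : IntervalIntegrable
        (fun x => ν x * (-μ * deriv f x + (1 / 2) * deriv (deriv f) x)) volume z y := by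
      apply Continuous.intervalIntegrable
      fun_prop
    have := integral_eq_sub_of_hasDerivAt hderiv hint2
    rw [this]
  rw [LHS, d1, d2, dyy, dyz, dzz, hP, hQ]
  field_simp
  ring
end

section
/- Let a^{(1)}, …, a^{(N)} ∈ ℝⁿ, let d ∈ ℝⁿ be a unit vector with ⟨a^{(j)}, d⟩ = 0 for every j, and let S(θ) = 1/(1 + e^{−θ}). Let X : [0,∞) → ℝⁿ be continuous and let z : [0,∞) → ℝⁿ be differentiable with z'(t) = (1/2) Σ_{j=1}^N a^{(j)} [ S(⟨a^{(j)}, z(t) + X(t)⟩) − S(⟨a^{(j)}, X(t)⟩) ] for all t ≥ 0. Then: (a) ⟨d, z(t)⟩ is constant in t; (b) t ↦ ‖z(t) − ⟨d, z(t)⟩ d‖ is nondecreasing; consequently (c) t ↦ ‖z(t)‖ is nondecreasing, and if |⟨d, z(0)⟩| ≤ c ‖z(0)‖ for some c ≥ 0 then |⟨d, z(t)⟩| ≤ c ‖z(t)‖ for all t ≥ 0. -/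
open RealInnerProductSpace

/-- The logistic sigmoid function `S(θ) = 1/(1 + e^{−θ})`. -/
noncomputable def logisticS (θ : ℝ) : ℝ := (1 + Real.exp (-θ))⁻¹

/-! The drift `β(x) = ½ ∑ⱼ (S(⟨aⱼ, x⟩) - bⱼ) aⱼ` takes values in the span of the inputs, so
the velocity `ż = β(z + X) - β(X)` is orthogonal to `d` and `⟨d, z⟩` is conserved. Since `S` is
monotone, each term `(S(⟨aⱼ, z + X⟩) - S(⟨aⱼ, X⟩)) ⟨aⱼ, z⟩` is nonnegative, so `⟨ż, z⟩ ≥ 0` and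
`‖z‖²` is nondecreasing; the same holds for `z - ⟨d, z⟩ d`, which differs from `z` by a
constant vector orthogonal to `ż`. -/

lemma logisticS_monotone : Monotone logisticS := fun _ _ h =>
  inv_anti₀ (by positivity) (add_le_add_right (Real.exp_le_exp.2 (neg_le_neg h)) 1)

section

variable {E : Type*} [NormedAddCommGroup E] [InnerProductSpace ℝ E] {D : Set ℝ}

lemma Convex.monotoneOn_of_hasDerivWithinAt_nonneg (hD : Convex ℝ D) {f f' : ℝ → ℝ}
    (hf : ∀ x ∈ D, HasDerivWithinAt f (f' x) D x) (hf' : ∀ x ∈ D, 0 ≤ f' x) :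
    MonotoneOn f D :=
  _root_.monotoneOn_of_hasDerivWithinAt_nonneg hD (fun x hx => (hf x hx).continuousWithinAt)
    (fun x hx => (hf x (interior_subset hx)).mono interior_subset)
    (fun x hx => hf' x (interior_subset hx))

lemma Convex.eq_of_hasDerivWithinAt_zero (hD : Convex ℝ D) {f : ℝ → ℝ}
    (hf : ∀ x ∈ D, HasDerivWithinAt f 0 D x) {s t : ℝ} (hs : s ∈ D) (ht : t ∈ D) :
    f t = f s := by
  have hmono : MonotoneOn f D := hD.monotoneOn_of_hasDerivWithinAt_nonneg hf fun _ _ => le_rfl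
  have hanti : MonotoneOn (-f) D :=
    hD.monotoneOn_of_hasDerivWithinAt_nonneg (fun x hx => by simpa using (hf x hx).neg)
      fun _ _ => le_rfl
  rcases le_total s t with hst | hts
  · exact le_antisymm (neg_le_neg_iff.1 (hanti hs ht hst)) (hmono hs ht hst)
  · exact le_antisymm (hmono ht hs hts) (neg_le_neg_iff.1 (hanti ht hs hts))

lemma inner_sum_sub_smul_nonneg {ι : Type*} [Fintype ι] {σ : ℝ → ℝ} (hσ : Monotone σ)
    (a : ι → E) (x z : E) :
    0 ≤ ⟪z, ∑ j, (σ ⟪a j, z + x⟫ - σ ⟪a j, x⟫) • a j⟫ := by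
  rw [inner_sum]
  refine Finset.sum_nonneg fun j _ => ?_
  have h := Monovary.sub_mul_sub_nonneg (monovary_id_iff.2 hσ) ⟪a j, x⟫ ⟪a j, z + x⟫
  rw [inner_smul_right, real_inner_comm (a j) z]
  convert h using 3
  rw [id, id, inner_add_right, add_sub_cancel_right]

variable {z v : ℝ → E}

lemma Convex.inner_eq_of_hasDerivWithinAt (hD : Convex ℝ D)
    (hz : ∀ t ∈ D, HasDerivWithinAt z (v t) D t) {d : E} (hv : ∀ t ∈ D, ⟪d, v t⟫ = 0)
    {s t : ℝ} (hs : s ∈ D) (ht : t ∈ D) : ⟪d, z t⟫ = ⟪d, z s⟫ :=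
  hD.eq_of_hasDerivWithinAt_zero (fun x hx => by
    simpa [hv x hx] using (hasDerivWithinAt_const x D d).inner ℝ (hz x hx)) hs ht

lemma Convex.monotoneOn_norm_of_hasDerivWithinAt (hD : Convex ℝ D)
    (hz : ∀ t ∈ D, HasDerivWithinAt z (v t) D t) (hv : ∀ t ∈ D, 0 ≤ ⟪z t, v t⟫) :
    MonotoneOn (‖z ·‖) D := by
  have hsq : MonotoneOn (‖z ·‖ ^ 2) D :=
    hD.monotoneOn_of_hasDerivWithinAt_nonneg (fun t ht => (hz t ht).norm_sq)
      fun t ht => mul_nonneg zero_le_two (hv t ht)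
  intro s hs t ht hst
  exact (pow_le_pow_iff_left₀ (norm_nonneg _) (norm_nonneg _) two_ne_zero).1 (hsq hs ht hst)

end

theorem stmt19_general (n N : ℕ) (a : Fin N → EuclideanSpace ℝ (Fin n))
    (d : EuclideanSpace ℝ (Fin n))
    (horth : ∀ j, ⟪a j, d⟫ = 0)
    (X : ℝ → EuclideanSpace ℝ (Fin n))
    (z : ℝ → EuclideanSpace ℝ (Fin n))
    (hz : ∀ t : ℝ, 0 ≤ t → HasDerivWithinAt z
      ((1 / 2 : ℝ) • ∑ j, (logisticS ⟪a j, z t + X t⟫ - logisticS ⟪a j, X t⟫) • a j)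
      (Set.Ici 0) t) :
    (∀ s t : ℝ, 0 ≤ s → 0 ≤ t → ⟪d, z t⟫ = ⟪d, z s⟫) ∧
    (MonotoneOn (fun t => ‖z t - ⟪d, z t⟫ • d‖) (Set.Ici 0)) ∧
    (MonotoneOn (fun t => ‖z t‖) (Set.Ici 0)) ∧
    (∀ c : ℝ, 0 ≤ c → |⟪d, z 0⟫| ≤ c * ‖z 0‖ →
      ∀ t : ℝ, 0 ≤ t → |⟪d, z t⟫| ≤ c * ‖z t‖) := by
  set v : ℝ → EuclideanSpace ℝ (Fin n) := fun t =>
    (1 / 2 : ℝ) • ∑ j, (logisticS ⟪a j, z t + X t⟫ - logisticS ⟪a j, X t⟫) • a j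
  have hvd : ∀ t, ⟪d, v t⟫ = 0 := fun t => by
    rw [real_inner_comm]
    simp [v, real_inner_smul_left, sum_inner, horth]
  have hvz : ∀ t, 0 ≤ ⟪z t, v t⟫ := fun t => by
    simpa only [v, inner_smul_right] using
      mul_nonneg (by norm_num) (inner_sum_sub_smul_nonneg logisticS_monotone a (X t) (z t))
  have hconst : ∀ s t : ℝ, 0 ≤ s → 0 ≤ t → ⟪d, z t⟫ = ⟪d, z s⟫ := fun s t hs ht =>
    (convex_Ici 0).inner_eq_of_hasDerivWithinAt hz (fun t _ => hvd t) hs ht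
  have hperp : MonotoneOn (fun t => ‖z t - ⟪d, z 0⟫ • d‖) (Set.Ici 0) :=
    (convex_Ici 0).monotoneOn_norm_of_hasDerivWithinAt (fun t ht => (hz t ht).sub_const _)
      fun t _ => by
        rw [inner_sub_left, real_inner_smul_left, hvd t, mul_zero, sub_zero]
        exact hvz t
  have hnorm : MonotoneOn (fun t => ‖z t‖) (Set.Ici 0) :=
    (convex_Ici 0).monotoneOn_norm_of_hasDerivWithinAt hz fun t _ => hvz t
  refine ⟨hconst, hperp.congr fun t ht => by simp only [hconst 0 t le_rfl ht], hnorm, ?_⟩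
  intro c hc h0 t ht
  calc |⟪d, z t⟫| = |⟪d, z 0⟫| := by rw [hconst 0 t le_rfl ht]
    _ ≤ c * ‖z 0‖ := h0
    _ ≤ c * ‖z t‖ := mul_le_mul_of_nonneg_left (hnorm Set.self_mem_Ici ht ht) hc

/-- The claim at the end of Section 5.1 (Bernoulli-logistic regression model): for the
difference `z(t)` of two forward solutions, the component of `z` along the unit normal `d`
to the span of the inputs is conserved, the norm of its component in the span is
nondecreasing, hence `‖z(t)‖` is nondecreasing and the angle condition
`|⟨d,z⟩| ≤ c‖z‖` is preserved. -/
theorem stmt19 (n N : ℕ) (a : Fin N → EuclideanSpace ℝ (Fin n))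
    (d : EuclideanSpace ℝ (Fin n)) (hd : ‖d‖ = 1)
    (horth : ∀ j, ⟪a j, d⟫ = 0)
    (X : ℝ → EuclideanSpace ℝ (Fin n)) (hX : ContinuousOn X (Set.Ici 0))
    (z : ℝ → EuclideanSpace ℝ (Fin n))
    (hz : ∀ t : ℝ, 0 ≤ t → HasDerivWithinAt z
      ((1 / 2 : ℝ) • ∑ j, (logisticS ⟪a j, z t + X t⟫ - logisticS ⟪a j, X t⟫) • a j)
      (Set.Ici 0) t) :
    (∀ s t : ℝ, 0 ≤ s → 0 ≤ t → ⟪d, z t⟫ = ⟪d, z s⟫) ∧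
    (MonotoneOn (fun t => ‖z t - ⟪d, z t⟫ • d‖) (Set.Ici 0)) ∧
    (MonotoneOn (fun t => ‖z t‖) (Set.Ici 0)) ∧
    (∀ c : ℝ, 0 ≤ c → |⟪d, z 0⟫| ≤ c * ‖z 0‖ →
      ∀ t : ℝ, 0 ≤ t → |⟪d, z t⟫| ≤ c * ‖z t‖) :=
  stmt19_general n N a d horth X z hz
end
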